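/- arXiv:2102.00185 — 11 statements merged into one kernel-verified Lean document; each statement's English description precedes it below -/
import Mathlib

section
/- Let A be a d×d real matrix and Q a symmetric positive definite d×d real matrix with AᵀQ + QA = I_d. For x ∈ ℝ^d set ‖x‖_Q = (xᵀQx)^{1/2}, let ‖A‖_Q = sup_{x≠0} ‖Ax‖_Q/‖x‖_Q, let ‖Q‖ denote the spectral norm of Q, and set a = (1/2)‖Q‖^{-1}. Then for every α ∈ [0, (1/2)‖A‖_Q^{-2}‖Q‖^{-1}]: (i) ‖(I_d − αA)x‖_Q² ≤ (1 − aα)‖x‖_Q² for all x ∈ ℝ^d; (ii) ‖I_d − αA‖ ≤ κ_Q^{1/2}(1 − aα/2), where ‖·‖ on the left is the spectral (Euclidean operator) norm and κ_Q = λ_max(Q)/λ_min(Q) is the ratio of the largest to the smallest eigenvalue of Q. -/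
/-!
Expanding the square, the Lyapunov identity `AᵀQ + QA = I` turns the cross term of
`‖x - αAx‖_Q²` into `-α‖x‖²`, so `‖(I - αA)x‖_Q² = ‖x‖_Q² - α‖x‖² + α²‖Ax‖_Q²`. The choice of `α`
makes the last term at most `α‖x‖_Q² / (2‖Q‖)`, while `‖x‖_Q² ≤ ‖Q‖‖x‖²`; together these give (i).
For (ii), the Rayleigh bounds `λ_min ‖y‖² ≤ ‖y‖_Q² ≤ λ_max ‖y‖²` turn (i) into the Euclidean bound
`‖(I - αA)x‖² ≤ κ_Q (1 - aα) ‖x‖²`, and `√(1 - aα) ≤ 1 - aα/2`.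
-/

open Matrix

/-- The spectral norm (Euclidean operator norm) of a real square matrix. -/
noncomputable def specNorm {d : ℕ} (M : Matrix (Fin d) (Fin d) ℝ) : ℝ :=
  ‖(Matrix.toEuclideanCLM (𝕜 := ℝ) M :
      EuclideanSpace ℝ (Fin d) →L[ℝ] EuclideanSpace ℝ (Fin d))‖

/-- The `Q`-weighted norm `‖x‖_Q = (xᵀQx)^{1/2}`. -/
noncomputable def qNorm {d : ℕ} (Q : Matrix (Fin d) (Fin d) ℝ) (x : Fin d → ℝ) : ℝ :=
  Real.sqrt (x ⬝ᵥ (Q *ᵥ x))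

/-- The operator norm of `A` induced by the `Q`-weighted norm,
`‖A‖_Q = sup_{x ≠ 0} ‖Ax‖_Q / ‖x‖_Q`. -/
noncomputable def qOpNorm {d : ℕ} (Q A : Matrix (Fin d) (Fin d) ℝ) : ℝ :=
  sSup {r : ℝ | ∃ x : Fin d → ℝ, x ≠ 0 ∧ r = qNorm Q (A *ᵥ x) / qNorm Q x}

open WithLp

lemma EuclideanSpace.norm_toLp_sq {n : Type*} [Fintype n] (v : n → ℝ) :
    ‖toLp 2 v‖ ^ 2 = v ⬝ᵥ v := by
  rw [← real_inner_self_eq_norm_sq, EuclideanSpace.inner_eq_star_dotProduct, star_trivial]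

section SpectralNorm

variable {d : ℕ} (M : Matrix (Fin d) (Fin d) ℝ)

lemma specNorm_nonneg : 0 ≤ specNorm M := norm_nonneg _

lemma dotProduct_mulVec_le_specNorm_mul (v : Fin d → ℝ) :
    v ⬝ᵥ M *ᵥ v ≤ specNorm M * (v ⬝ᵥ v) := by
  set T := toEuclideanCLM (𝕜 := ℝ) M
  calc v ⬝ᵥ M *ᵥ v = inner ℝ (toLp 2 v) (T (toLp 2 v)) := (inner_toEuclideanCLM M _ _).symm
    _ ≤ ‖toLp 2 v‖ * ‖T (toLp 2 v)‖ := real_inner_le_norm _ _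
    _ ≤ ‖toLp 2 v‖ * (‖T‖ * ‖toLp 2 v‖) := by gcongr; exact T.le_opNorm _
    _ = specNorm M * (v ⬝ᵥ v) := by rw [← EuclideanSpace.norm_toLp_sq, specNorm]; ring

lemma mulVec_dotProduct_mulVec_le_specNorm_sq_mul (v : Fin d → ℝ) :
    M *ᵥ v ⬝ᵥ M *ᵥ v ≤ specNorm M ^ 2 * (v ⬝ᵥ v) := by
  have hop := (toEuclideanCLM (𝕜 := ℝ) M).le_opNorm (toLp 2 v)
  rw [toEuclideanCLM_toLp] at hop
  rw [← EuclideanSpace.norm_toLp_sq, ← EuclideanSpace.norm_toLp_sq, specNorm, ← mul_pow]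
  gcongr

lemma specNorm_le_sqrt {C : ℝ} (h : ∀ v, M *ᵥ v ⬝ᵥ M *ᵥ v ≤ C * (v ⬝ᵥ v)) :
    specNorm M ≤ √C := by
  refine (toEuclideanCLM (𝕜 := ℝ) M).opNorm_le_bound (Real.sqrt_nonneg C) fun x => ?_
  rw [← toLp_ofLp 2 x, toEuclideanCLM_toLp]
  calc ‖toLp 2 (M *ᵥ ofLp x)‖ = √(‖toLp 2 (M *ᵥ ofLp x)‖ ^ 2) := (Real.sqrt_sq (norm_nonneg _)).symm
    _ ≤ √(C * ‖toLp 2 (ofLp x)‖ ^ 2) := by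
      simp only [EuclideanSpace.norm_toLp_sq]
      exact Real.sqrt_le_sqrt (h _)
    _ = √C * ‖toLp 2 (ofLp x)‖ := by
      rw [Real.sqrt_mul' _ (sq_nonneg _), Real.sqrt_sq (norm_nonneg _)]

end SpectralNorm

section Rayleigh

variable {n : Type*} [Fintype n] [DecidableEq n]

lemma iInf_mul_dotProduct_le_dotProduct_diagonal_mulVec (μ : n → ℝ) (y : n → ℝ) :
    (⨅ i, μ i) * (y ⬝ᵥ y) ≤ y ⬝ᵥ diagonal μ *ᵥ y := by
  simp only [dotProduct, mulVec_diagonal, Finset.mul_sum]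
  refine Finset.sum_le_sum fun i _ => ?_
  have := ciInf_le (Set.finite_range μ).bddBelow i
  nlinarith [mul_self_nonneg (y i)]

lemma dotProduct_diagonal_mulVec_le_iSup_mul_dotProduct (μ : n → ℝ) (y : n → ℝ) :
    y ⬝ᵥ diagonal μ *ᵥ y ≤ (⨆ i, μ i) * (y ⬝ᵥ y) := by
  simp only [dotProduct, mulVec_diagonal, Finset.mul_sum]
  refine Finset.sum_le_sum fun i _ => ?_
  have := le_ciSup (Set.finite_range μ).bddAbove i
  nlinarith [mul_self_nonneg (y i)]

namespace Matrix.IsHermitian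

variable {Q : Matrix n n ℝ}

lemma exists_dotProduct_eq_and_dotProduct_mulVec_eq_diagonal (hQ : Q.IsHermitian) (v : n → ℝ) :
    ∃ y : n → ℝ, v ⬝ᵥ v = y ⬝ᵥ y ∧ v ⬝ᵥ Q *ᵥ v = y ⬝ᵥ diagonal hQ.eigenvalues *ᵥ y := by
  set U : Matrix n n ℝ := ↑hQ.eigenvectorUnitary
  have hUstar : star U = Uᵀ := by
    rw [star_eq_conjTranspose, conjTranspose_eq_transpose_of_trivial]
  have hU : U * Uᵀ = 1 := hUstar ▸ (mem_unitaryGroup_iff).mp hQ.eigenvectorUnitary.2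
  have hQU : Q = U * diagonal hQ.eigenvalues * Uᵀ := by
    conv_lhs => rw [hQ.spectral_theorem]
    rw [Unitary.conjStarAlgAut_apply, hUstar]
    rfl
  refine ⟨Uᵀ *ᵥ v, ?_, ?_⟩
  · rw [dotProduct_mulVec, vecMul_transpose, mulVec_mulVec, hU, one_mulVec]
  · conv_lhs => rw [hQU]
    rw [← mulVec_mulVec, ← mulVec_mulVec, dotProduct_mulVec, ← mulVec_transpose]

lemma iInf_eigenvalues_mul_le (hQ : Q.IsHermitian) (v : n → ℝ) :
    (⨅ i, hQ.eigenvalues i) * (v ⬝ᵥ v) ≤ v ⬝ᵥ Q *ᵥ v := by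
  obtain ⟨y, hvv, hvQv⟩ := hQ.exists_dotProduct_eq_and_dotProduct_mulVec_eq_diagonal v
  rw [hvv, hvQv]
  exact iInf_mul_dotProduct_le_dotProduct_diagonal_mulVec _ y

lemma le_iSup_eigenvalues_mul (hQ : Q.IsHermitian) (v : n → ℝ) :
    v ⬝ᵥ Q *ᵥ v ≤ (⨆ i, hQ.eigenvalues i) * (v ⬝ᵥ v) := by
  obtain ⟨y, hvv, hvQv⟩ := hQ.exists_dotProduct_eq_and_dotProduct_mulVec_eq_diagonal v
  rw [hvv, hvQv]
  exact dotProduct_diagonal_mulVec_le_iSup_mul_dotProduct _ y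

end Matrix.IsHermitian

lemma Matrix.PosDef.iInf_eigenvalues_pos [Nonempty n] {Q : Matrix n n ℝ} (hQ : Q.PosDef) :
    0 < ⨅ i, hQ.1.eigenvalues i := by
  obtain ⟨i, hi⟩ := exists_eq_ciInf_of_finite (f := hQ.1.eigenvalues)
  exact hi ▸ hQ.eigenvalues_pos i

end Rayleigh

section QNorm

variable {d : ℕ}

lemma qNorm_nonneg (Q : Matrix (Fin d) (Fin d) ℝ) (x : Fin d → ℝ) : 0 ≤ qNorm Q x :=
  Real.sqrt_nonneg _

variable {Q : Matrix (Fin d) (Fin d) ℝ}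

lemma qNorm_sq (hQ : Q.PosSemidef) (x : Fin d → ℝ) : qNorm Q x ^ 2 = x ⬝ᵥ Q *ᵥ x :=
  Real.sq_sqrt (by simpa using hQ.dotProduct_mulVec_nonneg x)

lemma qNorm_pos (hQ : Q.PosDef) {x : Fin d → ℝ} (hx : x ≠ 0) : 0 < qNorm Q x :=
  Real.sqrt_pos.2 (by simpa using hQ.dotProduct_mulVec_pos hx)

lemma iInf_eigenvalues_mul_le_qNorm_sq (hQ : Q.PosDef) (x : Fin d → ℝ) :
    (⨅ i, hQ.1.eigenvalues i) * (x ⬝ᵥ x) ≤ qNorm Q x ^ 2 :=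
  qNorm_sq hQ.posSemidef x ▸ hQ.1.iInf_eigenvalues_mul_le x

lemma qNorm_sq_le_iSup_eigenvalues_mul (hQ : Q.PosDef) (x : Fin d → ℝ) :
    qNorm Q x ^ 2 ≤ (⨆ i, hQ.1.eigenvalues i) * (x ⬝ᵥ x) :=
  qNorm_sq hQ.posSemidef x ▸ hQ.1.le_iSup_eigenvalues_mul x

lemma qNorm_sq_mulVec_le [Nonempty (Fin d)] (hQ : Q.PosDef) (A : Matrix (Fin d) (Fin d) ℝ)
    (x : Fin d → ℝ) :
    qNorm Q (A *ᵥ x) ^ 2 ≤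
      (⨆ i, hQ.1.eigenvalues i) / (⨅ i, hQ.1.eigenvalues i) * specNorm A ^ 2 * qNorm Q x ^ 2 := by
  have hmin := hQ.iInf_eigenvalues_pos
  have hmax : 0 ≤ ⨆ i, hQ.1.eigenvalues i := hmin.le.trans <|
    ciInf_le_ciSup (Set.finite_range _).bddBelow (Set.finite_range _).bddAbove
  calc qNorm Q (A *ᵥ x) ^ 2 ≤ (⨆ i, hQ.1.eigenvalues i) * (A *ᵥ x ⬝ᵥ A *ᵥ x) :=
        qNorm_sq_le_iSup_eigenvalues_mul hQ _
    _ ≤ (⨆ i, hQ.1.eigenvalues i) * (specNorm A ^ 2 * (x ⬝ᵥ x)) := by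
        gcongr; exact mulVec_dotProduct_mulVec_le_specNorm_sq_mul A x
    _ ≤ _ := by
        rw [div_mul_eq_mul_div, div_mul_eq_mul_div, le_div_iff₀ hmin]
        have := mul_le_mul_of_nonneg_left (iInf_eigenvalues_mul_le_qNorm_sq hQ x)
          (mul_nonneg hmax (sq_nonneg (specNorm A)))
        linarith

lemma exists_qNorm_mulVec_le [Nonempty (Fin d)] (hQ : Q.PosDef) (A : Matrix (Fin d) (Fin d) ℝ) :
    ∃ C, ∀ x, qNorm Q (A *ᵥ x) ≤ C * qNorm Q x := by
  set K := (⨆ i, hQ.1.eigenvalues i) / (⨅ i, hQ.1.eigenvalues i) * specNorm A ^ 2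
  refine ⟨√K, fun x => ?_⟩
  calc qNorm Q (A *ᵥ x) = √(qNorm Q (A *ᵥ x) ^ 2) := (Real.sqrt_sq (qNorm_nonneg Q _)).symm
    _ ≤ √(K * qNorm Q x ^ 2) := Real.sqrt_le_sqrt (qNorm_sq_mulVec_le hQ A x)
    _ = √K * qNorm Q x := by rw [Real.sqrt_mul' _ (sq_nonneg _), Real.sqrt_sq (qNorm_nonneg Q x)]

lemma qNorm_mulVec_le_qOpNorm_mul [Nonempty (Fin d)] (hQ : Q.PosDef)
    (A : Matrix (Fin d) (Fin d) ℝ) (x : Fin d → ℝ) :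
    qNorm Q (A *ᵥ x) ≤ qOpNorm Q A * qNorm Q x := by
  rcases eq_or_ne x 0 with rfl | hx
  · simp [qNorm]
  obtain ⟨C, hC⟩ := exists_qNorm_mulVec_le hQ A
  have hbdd : BddAbove {r : ℝ | ∃ x : Fin d → ℝ, x ≠ 0 ∧ r = qNorm Q (A *ᵥ x) / qNorm Q x} := by
    refine ⟨C, ?_⟩
    rintro _ ⟨y, hy, rfl⟩
    exact (div_le_iff₀ (qNorm_pos hQ hy)).2 (hC y)
  rw [← div_le_iff₀ (qNorm_pos hQ hx)]
  exact le_csSup hbdd ⟨x, hx, rfl⟩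

end QNorm

lemma dotProduct_mulVec_sub_smul_mulVec {n R : Type*} [Fintype n] [CommRing R]
    (Q A : Matrix n n R) (α : R) (x : n → R) :
    (x - α • A *ᵥ x) ⬝ᵥ Q *ᵥ (x - α • A *ᵥ x) =
      x ⬝ᵥ Q *ᵥ x - α * (x ⬝ᵥ (Aᵀ * Q + Q * A) *ᵥ x) + α ^ 2 * (A *ᵥ x ⬝ᵥ Q *ᵥ (A *ᵥ x)) := by
  have hcross : A *ᵥ x ⬝ᵥ Q *ᵥ x = x ⬝ᵥ (Aᵀ * Q) *ᵥ x := by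
    rw [dotProduct_comm, dotProduct_mulVec, ← mulVec_transpose, dotProduct_comm, mulVec_mulVec]
  simp only [mulVec_sub, mulVec_smul, dotProduct_sub, sub_dotProduct, dotProduct_smul,
    smul_dotProduct, smul_eq_mul, add_mulVec, dotProduct_add, hcross, ← mulVec_mulVec]
  ring

lemma mul_sq_le_of_le_mul_inv_sq {α c r : ℝ} (hc : 0 ≤ c) (h : α ≤ c * r⁻¹ ^ 2) :
    α * r ^ 2 ≤ c :=
  calc α * r ^ 2 ≤ c * r⁻¹ ^ 2 * r ^ 2 := by gcongr
    _ = c * (r * r⁻¹) ^ 2 := by ring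
    _ ≤ c * 1 := by
        gcongr
        rcases eq_or_ne r 0 with hr | hr <;> simp [hr]
    _ = c := mul_one c

lemma Real.sqrt_one_sub_le_one_sub_half {t : ℝ} (ht : t ≤ 1) : √(1 - t) ≤ 1 - t / 2 :=
  Real.sqrt_le_iff.2 ⟨by linarith, by nlinarith [sq_nonneg t]⟩

section Lyapunov

variable {d : ℕ} {Q A : Matrix (Fin d) (Fin d) ℝ}

theorem qNorm_sq_one_sub_smul_mulVec_le (hQ : Q.PosSemidef) (hLyap : Aᵀ * Q + Q * A = 1)
    {r α : ℝ} (hA : ∀ x, qNorm Q (A *ᵥ x) ≤ r * qNorm Q x) (hα0 : 0 ≤ α)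
    (hα : α * r ^ 2 ≤ 1 / 2 * (specNorm Q)⁻¹) (x : Fin d → ℝ) :
    qNorm Q ((1 - α • A) *ᵥ x) ^ 2 ≤ (1 - 1 / 2 * (specNorm Q)⁻¹ * α) * qNorm Q x ^ 2 := by
  have hAx : A *ᵥ x ⬝ᵥ Q *ᵥ (A *ᵥ x) ≤ r ^ 2 * (x ⬝ᵥ Q *ᵥ x) := by
    rw [← qNorm_sq hQ, ← qNorm_sq hQ, ← mul_pow]
    exact pow_le_pow_left₀ (qNorm_nonneg Q _) (hA x) 2
  have hQx : (specNorm Q)⁻¹ * (x ⬝ᵥ Q *ᵥ x) ≤ x ⬝ᵥ x :=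
    inv_mul_le_of_le_mul₀ (specNorm_nonneg Q) (by rw [← EuclideanSpace.norm_toLp_sq]; positivity)
      (dotProduct_mulVec_le_specNorm_mul Q x)
  have hxQx : 0 ≤ x ⬝ᵥ Q *ᵥ x := qNorm_sq hQ x ▸ sq_nonneg _
  rw [sub_mulVec, one_mulVec, smul_mulVec, qNorm_sq hQ, qNorm_sq hQ,
    dotProduct_mulVec_sub_smul_mulVec, hLyap, one_mulVec]
  have h1 := mul_le_mul_of_nonneg_left hAx (sq_nonneg α)
  have h2 := mul_le_mul_of_nonneg_right (mul_le_mul_of_nonneg_left hα hα0) hxQx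
  have h3 := mul_le_mul_of_nonneg_left hQx hα0
  linarith

lemma nonneg_of_qNorm_sq_mulVec_le [Nonempty (Fin d)] (hQ : Q.PosDef) {M : Matrix (Fin d) (Fin d) ℝ}
    {c : ℝ} (h : ∀ x, qNorm Q (M *ᵥ x) ^ 2 ≤ c * qNorm Q x ^ 2) : 0 ≤ c := by
  obtain ⟨i⟩ := ‹Nonempty (Fin d)›
  have hx : Pi.single i 1 ≠ (0 : Fin d → ℝ) := by simp
  exact nonneg_of_mul_nonneg_left ((sq_nonneg _).trans (h _)) (pow_pos (qNorm_pos hQ hx) 2)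

theorem specNorm_le_of_qNorm_sq_mulVec_le [Nonempty (Fin d)] (hQ : Q.PosDef)
    {M : Matrix (Fin d) (Fin d) ℝ} {c : ℝ} (hc : 0 ≤ c)
    (h : ∀ x, qNorm Q (M *ᵥ x) ^ 2 ≤ c * qNorm Q x ^ 2) :
    specNorm M ≤ √((⨆ i, hQ.1.eigenvalues i) / (⨅ i, hQ.1.eigenvalues i)) * √c := by
  rw [← Real.sqrt_mul' _ hc]
  refine specNorm_le_sqrt M fun x => ?_
  have hmin := hQ.iInf_eigenvalues_pos
  rw [div_mul_eq_mul_div, div_mul_eq_mul_div, le_div_iff₀ hmin, mul_comm]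
  calc (⨅ i, hQ.1.eigenvalues i) * (M *ᵥ x ⬝ᵥ M *ᵥ x) ≤ qNorm Q (M *ᵥ x) ^ 2 :=
        iInf_eigenvalues_mul_le_qNorm_sq hQ _
    _ ≤ c * qNorm Q x ^ 2 := h x
    _ ≤ c * ((⨆ i, hQ.1.eigenvalues i) * (x ⬝ᵥ x)) := by
        gcongr; exact qNorm_sq_le_iSup_eigenvalues_mul hQ x
    _ = _ := by ring

end Lyapunov

/-- If `Q` is symmetric positive definite with `AᵀQ + QA = I`, then with
`a = (1/2)‖Q‖⁻¹`, for every `α ∈ [0, (1/2)‖A‖_Q⁻²‖Q‖⁻¹]`: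
(i) `‖(I − αA)x‖_Q² ≤ (1 − aα)‖x‖_Q²` for all `x`, and
(ii) `‖I − αA‖ ≤ κ_Q^{1/2} (1 − aα/2)` where `κ_Q = λ_max(Q)/λ_min(Q)`. -/
theorem hurwitz_stability {d : ℕ} (hd : 1 ≤ d)
    (A Q : Matrix (Fin d) (Fin d) ℝ) (hQ : Q.PosDef)
    (hLyap : Aᵀ * Q + Q * A = 1)
    (a : ℝ) (ha : a = (1 / 2) * (specNorm Q)⁻¹)
    (κ : ℝ)
    (hκ : κ = (⨆ i, hQ.1.eigenvalues i) / (⨅ i, hQ.1.eigenvalues i))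
    (α : ℝ) (hα0 : 0 ≤ α) (hα1 : α ≤ (1 / 2) * (qOpNorm Q A)⁻¹ ^ 2 * (specNorm Q)⁻¹) :
    (∀ x : Fin d → ℝ, qNorm Q ((1 - α • A) *ᵥ x) ^ 2 ≤ (1 - a * α) * qNorm Q x ^ 2) ∧
      specNorm (1 - α • A) ≤ Real.sqrt κ * (1 - a * α / 2) := by
  have : Nonempty (Fin d) := ⟨⟨0, hd⟩⟩
  subst ha hκ
  have hα : α * qOpNorm Q A ^ 2 ≤ 1 / 2 * (specNorm Q)⁻¹ :=
    mul_sq_le_of_le_mul_inv_sq (by have := specNorm_nonneg Q; positivity)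
      (by rwa [mul_right_comm] at hα1)
  have contraction := qNorm_sq_one_sub_smul_mulVec_le hQ.posSemidef hLyap
    (qNorm_mulVec_le_qOpNorm_mul hQ A) hα0 hα
  have hc := nonneg_of_qNorm_sq_mulVec_le hQ contraction
  refine ⟨contraction, (specNorm_le_of_qNorm_sq_mulVec_le hQ hc contraction).trans ?_⟩
  gcongr
  exact Real.sqrt_one_sub_le_one_sub_half (by linarith)
end

section
/- Let α > 0, let n ∈ ℕ with n ≥ 2, let ε ∈ (0,1), and let u_1, …, u_n be non-negative real numbers. Then 1 + αⁿ ∏_{i=1}^{n} u_i ≤ exp( α^{1+ε} (1+ε)^{-1} Σ_{i=1}^{n} u_i^{1+ε} ). -/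
/-!
With `p = 1 + ε` and `vᵢ = α uᵢ`, AM-GM applied to the `vᵢ ^ p` bounds `∏ vᵢ` by `y ^ m`, where
`y` is the mean of the `vᵢ ^ p` and `m = n / p`. Since `n ≥ 2 > p` we have `m ≥ 1`, so
`1 + y ^ m ≤ (1 + y) ^ m ≤ exp (y m)`, and `y m = (∑ vᵢ ^ p) / p`.
-/

open Finset Real

lemma Real.one_add_rpow_le_exp_mul {y m : ℝ} (hy : 0 ≤ y) (hm : 1 ≤ m) :
    1 + y ^ m ≤ exp (y * m) :=
  calc 1 + y ^ m = 1 ^ m + y ^ m := by rw [one_rpow]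
    _ ≤ (1 + y) ^ m := add_rpow_le_rpow_add zero_le_one hy hm
    _ ≤ exp y ^ m := by gcongr; linarith [add_one_le_exp y]
    _ = exp (y * m) := (exp_mul y m).symm

lemma Finset.prod_le_mean_rpow_rpow {ι : Type*} {s : Finset ι} (hs : s.Nonempty) {v : ι → ℝ}
    (hv : ∀ i ∈ s, 0 ≤ v i) {p : ℝ} (hp : 0 < p) :
    ∏ i ∈ s, v i ≤ ((∑ i ∈ s, v i ^ p) / #s) ^ ((#s : ℝ) / p) := by
  have hcard : (0 : ℝ) < #s := by exact_mod_cast hs.card_pos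
  have hprod : 0 ≤ ∏ i ∈ s, v i := prod_nonneg hv
  have amgm := geom_mean_le_arith_mean s (fun _ ↦ 1) (fun i ↦ v i ^ p) (fun _ _ ↦ zero_le_one)
    (by simpa using hcard) (fun i hi ↦ rpow_nonneg (hv i hi) p)
  simp only [rpow_one, sum_const, nsmul_eq_mul, mul_one, one_mul] at amgm
  rw [finsetProd_rpow s v hv, ← rpow_mul hprod] at amgm
  calc ∏ i ∈ s, v i = ((∏ i ∈ s, v i) ^ (p * (#s : ℝ)⁻¹)) ^ ((#s : ℝ) / p) := by
        rw [← rpow_mul hprod]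
        field_simp
        rw [rpow_one]
    _ ≤ ((∑ i ∈ s, v i ^ p) / #s) ^ ((#s : ℝ) / p) := by gcongr

theorem Finset.one_add_prod_le_exp_sum_rpow_div {ι : Type*} {s : Finset ι} {v : ι → ℝ}
    (hv : ∀ i ∈ s, 0 ≤ v i) {p : ℝ} (hp : 0 < p) (hps : p ≤ #s) :
    1 + ∏ i ∈ s, v i ≤ exp ((∑ i ∈ s, v i ^ p) / p) := by
  have hcard : (0 : ℝ) < #s := hp.trans_le hps
  have hs : s.Nonempty := card_pos.mp (by exact_mod_cast hcard)
  have hy : 0 ≤ (∑ i ∈ s, v i ^ p) / #s :=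
    div_nonneg (sum_nonneg fun i hi ↦ rpow_nonneg (hv i hi) p) hcard.le
  have hm : 1 ≤ (#s : ℝ) / p := (one_le_div hp).mpr hps
  calc 1 + ∏ i ∈ s, v i ≤ 1 + ((∑ i ∈ s, v i ^ p) / #s) ^ ((#s : ℝ) / p) := by
        gcongr; exact prod_le_mean_rpow_rpow hs hv hp
    _ ≤ exp ((∑ i ∈ s, v i ^ p) / #s * (#s / p)) := one_add_rpow_le_exp_mul hy hm
    _ = exp ((∑ i ∈ s, v i ^ p) / p) := by field_simp

/-- Let `α > 0`, `n ≥ 2`, `ε ∈ (0,1)`, and `u 0, …, u (n-1)` be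
non-negative reals. Then
`1 + αⁿ ∏ i, u i ≤ exp (α^(1+ε) / (1+ε) * ∑ i, (u i)^(1+ε))`. -/
theorem product_bound_exp (α ε : ℝ) (n : ℕ) (u : ℕ → ℝ)
    (hα : 0 < α) (hn : 2 ≤ n) (hε0 : 0 < ε) (hε1 : ε < 1)
    (hu : ∀ i, 0 ≤ u i) :
    1 + α ^ n * ∏ i ∈ Finset.range n, u i ≤
      Real.exp (α ^ (1 + ε) * (1 + ε)⁻¹ * ∑ i ∈ Finset.range n, u i ^ (1 + ε)) := by
  have hp : 0 < 1 + ε := by linarith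
  have hpn : 1 + ε ≤ #(range n) := by
    rw [card_range]
    have : (2 : ℝ) ≤ n := by exact_mod_cast hn
    linarith
  have hv : ∀ i ∈ range n, 0 ≤ α * u i := fun i _ ↦ mul_nonneg hα.le (hu i)
  calc 1 + α ^ n * ∏ i ∈ range n, u i = 1 + ∏ i ∈ range n, α * u i := by
        rw [prod_mul_distrib, prod_const, card_range]
    _ ≤ exp ((∑ i ∈ range n, (α * u i) ^ (1 + ε)) / (1 + ε)) :=
        one_add_prod_le_exp_sum_rpow_div hv hp hpn
    _ = exp (α ^ (1 + ε) * (1 + ε)⁻¹ * ∑ i ∈ range n, u i ^ (1 + ε)) := by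
        simp only [mul_rpow hα.le (hu _), ← mul_sum]
        ring_nf
end

section
/- Let (Ω, 𝓕, ℙ) be a probability space, (𝓕_ℓ)_{ℓ≥0} a filtration, and (ξ_ℓ)_{ℓ≥1} a sequence of non-negative random variables such that ξ_ℓ is 𝓕_ℓ-measurable for each ℓ. Let p ∈ ℕ, p ≥ 1, and N ∈ ℕ, and assume all the expectations below are finite and that the conditional expectations E[ξ_ℓ^{2p} | 𝓕_{ℓ-1}] are almost surely strictly positive. Then E[ ∏_{ℓ=1}^{N} ξ_ℓ^{p} ] ≤ ( E[ ∏_{ℓ=1}^{N} E[ ξ_ℓ^{2p} | 𝓕_{ℓ-1} ] ] )^{1/2}. -/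
/-!
Write `η_ℓ = E[ξ_ℓ^{2p} | 𝓕_{ℓ-1}]`. The normalised product `∏ ξ_ℓ^{2p} / η_ℓ` has expectation
one: everything in it except `ξ_N^{2p}` is `𝓕_{N-1}`-measurable, so the tower property replaces
`ξ_N^{2p}` by `η_N`, which cancels; induct on `N`. Cauchy–Schwarz applied to
`∏ ξ_ℓ^p = (∏ ξ_ℓ^p / √η_ℓ) · ∏ √η_ℓ` then gives the bound. Everything is done with lower
Lebesgue integrals, where the pull-out property needs no integrability of the products.
-/

open MeasureTheory Filter Finset
open scoped ENNReal

theorem ENNReal.ofReal_prod_sq_div_ofReal_prod {ι : Type*} (s : Finset ι) {x y : ι → ℝ}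
    (hx : ∀ i ∈ s, 0 ≤ x i) (hy : ∀ i ∈ s, 0 ≤ y i) :
    ENNReal.ofReal (∏ i ∈ s, x i) ^ 2 / ENNReal.ofReal (∏ i ∈ s, y i)
      = ∏ i ∈ s, ENNReal.ofReal (x i ^ 2) / ENNReal.ofReal (y i) := by
  rw [ENNReal.ofReal_prod_of_nonneg hx, ENNReal.ofReal_prod_of_nonneg hy, ← prod_pow,
    ← ENNReal.prod_div_distrib_of_ne_top fun _ _ => ENNReal.ofReal_ne_top]
  exact prod_congr rfl fun i hi => by rw [ENNReal.ofReal_pow (hx i hi)]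

namespace MeasureTheory

variable {Ω : Type*} {m m0 : MeasurableSpace Ω} {μ : Measure Ω}

theorem lintegral_mul_condLExp (hm : m ≤ m0) [SigmaFinite (μ.trim hm)] {X Y : Ω → ℝ≥0∞}
    (hX : AEMeasurable X μ) (hY : Measurable[m] Y) :
    ∫⁻ ω, Y ω * μ⁻[X|m] ω ∂μ = ∫⁻ ω, Y ω * X ω ∂μ := by
  have h_trim : (μ.withDensity μ⁻[X|m]).trim hm = (μ.withDensity X).trim hm := by
    refine @Measure.ext Ω m _ _ fun s hs => ?_
    rw [trim_measurableSet_eq hm hs, trim_measurableSet_eq hm hs, withDensity_apply _ (hm s hs),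
      withDensity_apply _ (hm s hs), setLIntegral_condLExp hm μ X hs]
  have hY' : Measurable Y := hY.mono hm le_rfl
  calc ∫⁻ ω, Y ω * μ⁻[X|m] ω ∂μ = ∫⁻ ω, Y ω ∂(μ.withDensity μ⁻[X|m]) := by
        rw [lintegral_withDensity_eq_lintegral_mul _ (measurable_condLExp' m μ X) hY']
        simp only [Pi.mul_apply, mul_comm]
    _ = ∫⁻ ω, Y ω ∂((μ.withDensity X).trim hm) := by rw [← h_trim, lintegral_trim hm hY]
    _ = ∫⁻ ω, Y ω * X ω ∂μ := by
        rw [lintegral_trim hm hY, lintegral_withDensity_eq_lintegral_mul₀ hX hY'.aemeasurable]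
        simp only [Pi.mul_apply, mul_comm]

theorem lintegral_mul_ofReal_condExp (hm : m ≤ m0) [SigmaFinite (μ.trim hm)] {X : Ω → ℝ}
    (hX : Integrable X μ) (hX_nonneg : 0 ≤ᵐ[μ] X) {Y : Ω → ℝ≥0∞} (hY : Measurable[m] Y) :
    ∫⁻ ω, Y ω * ENNReal.ofReal (μ[X|m] ω) ∂μ = ∫⁻ ω, Y ω * ENNReal.ofReal (X ω) ∂μ := by
  rw [← lintegral_mul_condLExp hm hX.aemeasurable.ennreal_ofReal hY]
  refine lintegral_congr_ae ?_
  filter_upwards [condLExp_ofReal m hX hX_nonneg] with ω hω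
  rw [hω]

theorem lintegral_prod_ofReal_div_condExp [IsFiniteMeasure μ] (ℱ : Filtration ℕ m0)
    {X : ℕ → Ω → ℝ} (n : ℕ)
    (hX_nonneg : ∀ ℓ ∈ Icc 1 n, 0 ≤ᵐ[μ] X ℓ)
    (hX_meas : ∀ ℓ ∈ Icc 1 n, Measurable[ℱ ℓ] (X ℓ))
    (hX_int : ∀ ℓ ∈ Icc 1 n, Integrable (X ℓ) μ)
    (hX_condExp_pos : ∀ ℓ ∈ Icc 1 n, ∀ᵐ ω ∂μ, 0 < μ[X ℓ|ℱ (ℓ - 1)] ω) :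
    ∫⁻ ω, ∏ ℓ ∈ Icc 1 n, ENNReal.ofReal (X ℓ ω) / ENNReal.ofReal (μ[X ℓ|ℱ (ℓ - 1)] ω) ∂μ
      = μ Set.univ := by
  induction n with
  | zero => simp
  | succ n ih =>
    have hsub : Icc 1 n ⊆ Icc 1 (n + 1) := Icc_subset_Icc_right n.le_succ
    have hlast : n + 1 ∈ Icc 1 (n + 1) := by simp
    set R : Ω → ℝ≥0∞ := fun ω =>
      ∏ ℓ ∈ Icc 1 n, ENNReal.ofReal (X ℓ ω) / ENNReal.ofReal (μ[X ℓ|ℱ (ℓ - 1)] ω)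
    set c : Ω → ℝ := μ[X (n + 1)|ℱ n]
    have hR_meas : Measurable[ℱ n] R := by
      refine Finset.measurable_prod _ fun ℓ hℓ => ?_
      obtain ⟨-, hℓn⟩ := mem_Icc.1 hℓ
      exact ((hX_meas ℓ (hsub hℓ)).mono (ℱ.mono hℓn) le_rfl).ennreal_ofReal.div
        (stronglyMeasurable_condExp.measurable.mono (ℱ.mono (by omega)) le_rfl).ennreal_ofReal
    have hc_meas : Measurable[ℱ n] fun ω => ENNReal.ofReal (c ω) :=
      stronglyMeasurable_condExp.measurable.ennreal_ofReal
    calc _ = ∫⁻ ω, R ω * (ENNReal.ofReal (c ω))⁻¹ * ENNReal.ofReal (X (n + 1) ω) ∂μ := by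
          refine lintegral_congr fun ω => ?_
          rw [prod_Icc_succ_top (by omega), add_tsub_cancel_right, div_eq_mul_inv]
          ring
      _ = ∫⁻ ω, R ω * (ENNReal.ofReal (c ω))⁻¹ * ENNReal.ofReal (c ω) ∂μ :=
          (lintegral_mul_ofReal_condExp (ℱ.le n) (hX_int _ hlast) (hX_nonneg _ hlast)
            (hR_meas.mul hc_meas.inv)).symm
      _ = ∫⁻ ω, R ω ∂μ := by
          refine lintegral_congr_ae ?_
          filter_upwards [hX_condExp_pos _ hlast] with ω hω
          rw [mul_assoc, ENNReal.inv_mul_cancel (by simpa using hω) ENNReal.ofReal_ne_top,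
            mul_one]
      _ = μ Set.univ := ih (fun ℓ hℓ => hX_nonneg ℓ (hsub hℓ)) (fun ℓ hℓ => hX_meas ℓ (hsub hℓ))
          (fun ℓ hℓ => hX_int ℓ (hsub hℓ)) (fun ℓ hℓ => hX_condExp_pos ℓ (hsub hℓ))

theorem lintegral_le_rpow_lintegral_sq_div_mul_rpow_lintegral {a b : Ω → ℝ≥0∞}
    (ha : AEMeasurable a μ) (hb : AEMeasurable b μ) (hb_ne_zero : ∀ᵐ ω ∂μ, b ω ≠ 0)
    (hb_ne_top : ∀ᵐ ω ∂μ, b ω ≠ ∞) :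
    ∫⁻ ω, a ω ∂μ ≤ (∫⁻ ω, a ω ^ 2 / b ω ∂μ) ^ (1 / 2 : ℝ) * (∫⁻ ω, b ω ∂μ) ^ (1 / 2 : ℝ) := by
  -- Hölder with exponents `2, 2` for `a = (a / √b) * √b`.
  set s : Ω → ℝ≥0∞ := fun ω => b ω ^ (1 / 2 : ℝ)
  have hs_sq : ∀ ω, s ω ^ (2 : ℝ) = b ω := fun ω => by
    rw [← ENNReal.rpow_mul]; norm_num
  have h_holder := ENNReal.lintegral_mul_le_Lp_mul_Lq μ Real.HolderConjugate.two_two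
    (f := fun ω => a ω / s ω) (g := s) (ha.div (hb.pow_const _)) (hb.pow_const _)
  refine (lintegral_congr_ae ?_).trans_le (h_holder.trans_eq ?_)
  · filter_upwards [hb_ne_zero, hb_ne_top] with ω h0 htop
    exact (ENNReal.div_mul_cancel (by simp [s, h0]) (by simp [s, htop])).symm
  · simp only [ENNReal.div_rpow_of_nonneg _ _ zero_le_two, hs_sq, ENNReal.rpow_two]

theorem lintegral_ofReal_prod_le_rpow_lintegral_ofReal_prod_condExp_sq [IsProbabilityMeasure μ]
    (ℱ : Filtration ℕ m0) {X : ℕ → Ω → ℝ} (n : ℕ)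
    (hX_nonneg : ∀ ℓ ∈ Icc 1 n, 0 ≤ᵐ[μ] X ℓ)
    (hX_meas : ∀ ℓ ∈ Icc 1 n, Measurable[ℱ ℓ] (X ℓ))
    (hX_sq_int : ∀ ℓ ∈ Icc 1 n, Integrable (fun ω => X ℓ ω ^ 2) μ)
    (hX_condExp_pos : ∀ ℓ ∈ Icc 1 n, ∀ᵐ ω ∂μ, 0 < μ[fun ω => X ℓ ω ^ 2|ℱ (ℓ - 1)] ω) :
    ∫⁻ ω, ENNReal.ofReal (∏ ℓ ∈ Icc 1 n, X ℓ ω) ∂μ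
      ≤ (∫⁻ ω, ENNReal.ofReal (∏ ℓ ∈ Icc 1 n, μ[fun ω => X ℓ ω ^ 2|ℱ (ℓ - 1)] ω) ∂μ)
          ^ (1 / 2 : ℝ) := by
  set η : ℕ → Ω → ℝ := fun ℓ => μ[fun ω => X ℓ ω ^ 2|ℱ (ℓ - 1)]
  have hη_nonneg : ∀ᵐ ω ∂μ, ∀ ℓ ∈ Icc 1 n, 0 ≤ η ℓ ω :=
    (eventually_all_finset _).2 fun ℓ _ => condExp_nonneg (ae_of_all _ fun ω => sq_nonneg _)
  have h_ratio : ∫⁻ ω, ∏ ℓ ∈ Icc 1 n,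
      ENNReal.ofReal (X ℓ ω ^ 2) / ENNReal.ofReal (η ℓ ω) ∂μ = 1 := by
    rw [← measure_univ (μ := μ)]
    exact lintegral_prod_ofReal_div_condExp ℱ n (fun ℓ _ => ae_of_all _ fun ω => sq_nonneg _)
      (fun ℓ hℓ => (hX_meas ℓ hℓ).pow_const 2) hX_sq_int hX_condExp_pos
  have h_sq_div : ∀ᵐ ω ∂μ,
      ENNReal.ofReal (∏ ℓ ∈ Icc 1 n, X ℓ ω) ^ 2 / ENNReal.ofReal (∏ ℓ ∈ Icc 1 n, η ℓ ω)
        = ∏ ℓ ∈ Icc 1 n, ENNReal.ofReal (X ℓ ω ^ 2) / ENNReal.ofReal (η ℓ ω) := by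
    filter_upwards [(eventually_all_finset _).2 hX_nonneg, hη_nonneg] with ω hXω hηω
    exact ENNReal.ofReal_prod_sq_div_ofReal_prod _ hXω hηω
  have h_cs := lintegral_le_rpow_lintegral_sq_div_mul_rpow_lintegral
    (Finset.measurable_prod _ fun ℓ hℓ =>
      (hX_meas ℓ hℓ).mono (ℱ.le ℓ) le_rfl).ennreal_ofReal.aemeasurable
    (Finset.measurable_prod _ fun ℓ _ =>
      stronglyMeasurable_condExp.measurable.mono (ℱ.le _) le_rfl).ennreal_ofReal.aemeasurable
    (((eventually_all_finset _).2 hX_condExp_pos).mono fun _ hω =>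
      (ENNReal.ofReal_pos.2 (prod_pos hω)).ne')
    (ae_of_all _ fun _ => ENNReal.ofReal_ne_top)
  rwa [lintegral_congr_ae h_sq_div, h_ratio, ENNReal.one_rpow, one_mul] at h_cs

theorem integral_le_sqrt_integral_of_lintegral_ofReal_le {f g : Ω → ℝ} (hf : 0 ≤ᵐ[μ] f)
    (hg : 0 ≤ᵐ[μ] g) (hg_int : Integrable g μ)
    (h : ∫⁻ ω, ENNReal.ofReal (f ω) ∂μ ≤ (∫⁻ ω, ENNReal.ofReal (g ω) ∂μ) ^ (1 / 2 : ℝ)) :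
    ∫ ω, f ω ∂μ ≤ √(∫ ω, g ω ∂μ) := by
  have h_enorm : ‖∫ ω, f ω ∂μ‖ₑ ≤ ∫⁻ ω, ENNReal.ofReal (f ω) ∂μ :=
    (enorm_integral_le_lintegral_enorm f).trans_eq
      (lintegral_congr_ae (hf.mono fun _ hω => Real.enorm_eq_ofReal hω))
  rw [Real.enorm_eq_ofReal (integral_nonneg_of_ae hf)] at h_enorm
  rw [← ofReal_integral_eq_lintegral_ofReal hg_int hg,
    ENNReal.ofReal_rpow_of_nonneg (integral_nonneg_of_ae hg) (by norm_num),
    ← Real.sqrt_eq_rpow] at h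
  exact (ENNReal.ofReal_le_ofReal_iff (Real.sqrt_nonneg _)).1 (h_enorm.trans h)

end MeasureTheory

theorem product_conditional_cauchy_schwarz_general {Ω : Type*} {m : MeasurableSpace Ω}
    (μ : Measure Ω) [IsProbabilityMeasure μ]
    (ℱ : Filtration ℕ m) (ξ : ℕ → Ω → ℝ)
    (hξ_nonneg : ∀ ℓ ω, 0 ≤ ξ ℓ ω)
    (hξ_meas : ∀ ℓ, 1 ≤ ℓ → Measurable[ℱ ℓ] (ξ ℓ))
    (p : ℕ) (N : ℕ)
    (hint₂ : ∀ ℓ, 1 ≤ ℓ → ℓ ≤ N → Integrable (fun ω => ξ ℓ ω ^ (2 * p)) μ)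
    (hint₃ : Integrable
      (fun ω => ∏ ℓ ∈ Finset.Icc 1 N, (μ[fun ω' => ξ ℓ ω' ^ (2 * p)|ℱ (ℓ - 1)]) ω) μ)
    (hpos : ∀ ℓ, 1 ≤ ℓ → ℓ ≤ N →
      ∀ᵐ ω ∂μ, 0 < (μ[fun ω' => ξ ℓ ω' ^ (2 * p)|ℱ (ℓ - 1)]) ω) :
    ∫ ω, ∏ ℓ ∈ Finset.Icc 1 N, ξ ℓ ω ^ p ∂μ ≤
      Real.sqrt
        (∫ ω, ∏ ℓ ∈ Finset.Icc 1 N, (μ[fun ω' => ξ ℓ ω' ^ (2 * p)|ℱ (ℓ - 1)]) ω ∂μ) := by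
  have h_pow_mul : ∀ ℓ ω, (ξ ℓ ω ^ p) ^ 2 = ξ ℓ ω ^ (2 * p) := fun ℓ ω => by ring
  have h_lintegral := lintegral_ofReal_prod_le_rpow_lintegral_ofReal_prod_condExp_sq ℱ
    (X := fun ℓ ω => ξ ℓ ω ^ p) N
    (fun ℓ _ => ae_of_all _ fun ω => pow_nonneg (hξ_nonneg ℓ ω) p)
    (fun ℓ hℓ => (hξ_meas ℓ (mem_Icc.1 hℓ).1).pow_const p)
    (fun ℓ hℓ => by simpa only [h_pow_mul] using hint₂ ℓ (mem_Icc.1 hℓ).1 (mem_Icc.1 hℓ).2)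
    (fun ℓ hℓ => by simpa only [h_pow_mul] using hpos ℓ (mem_Icc.1 hℓ).1 (mem_Icc.1 hℓ).2)
  simp only [h_pow_mul] at h_lintegral
  have h_condExp_nonneg : ∀ᵐ ω ∂μ, ∀ ℓ ∈ Icc 1 N,
      0 ≤ (μ[fun ω' => ξ ℓ ω' ^ (2 * p)|ℱ (ℓ - 1)]) ω :=
    (eventually_all_finset _).2 fun ℓ _ =>
      condExp_nonneg (ae_of_all _ fun ω => pow_nonneg (hξ_nonneg ℓ ω) _)
  exact integral_le_sqrt_integral_of_lintegral_ofReal_le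
    (ae_of_all _ fun ω => prod_nonneg fun ℓ _ => pow_nonneg (hξ_nonneg ℓ ω) p)
    (h_condExp_nonneg.mono fun _ => prod_nonneg) hint₃ h_lintegral

/-- Let `(𝓕_ℓ)` be a filtration and `(ξ_ℓ)_{ℓ≥1}` non-negative random
variables with `ξ_ℓ` being `𝓕_ℓ`-measurable. If the relevant expectations are finite and
the conditional expectations `E[ξ_ℓ^{2p} | 𝓕_{ℓ-1}]` are a.s. positive, then
`E[∏_{ℓ=1}^N ξ_ℓ^p] ≤ (E[∏_{ℓ=1}^N E[ξ_ℓ^{2p} | 𝓕_{ℓ-1}]])^{1/2}`. -/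
theorem product_conditional_cauchy_schwarz {Ω : Type*} {m : MeasurableSpace Ω}
    (μ : Measure Ω) [IsProbabilityMeasure μ]
    (ℱ : Filtration ℕ m) (ξ : ℕ → Ω → ℝ)
    (hξ_nonneg : ∀ ℓ ω, 0 ≤ ξ ℓ ω)
    (hξ_meas : ∀ ℓ, 1 ≤ ℓ → Measurable[ℱ ℓ] (ξ ℓ))
    (p : ℕ) (hp : 1 ≤ p) (N : ℕ)
    (hint₁ : Integrable (fun ω => ∏ ℓ ∈ Finset.Icc 1 N, ξ ℓ ω ^ p) μ)
    (hint₂ : ∀ ℓ, 1 ≤ ℓ → ℓ ≤ N → Integrable (fun ω => ξ ℓ ω ^ (2 * p)) μ)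
    (hint₃ : Integrable
      (fun ω => ∏ ℓ ∈ Finset.Icc 1 N, (μ[fun ω' => ξ ℓ ω' ^ (2 * p)|ℱ (ℓ - 1)]) ω) μ)
    (hpos : ∀ ℓ, 1 ≤ ℓ → ℓ ≤ N →
      ∀ᵐ ω ∂μ, 0 < (μ[fun ω' => ξ ℓ ω' ^ (2 * p)|ℱ (ℓ - 1)]) ω) :
    ∫ ω, ∏ ℓ ∈ Finset.Icc 1 N, ξ ℓ ω ^ p ∂μ ≤
      Real.sqrt
        (∫ ω, ∏ ℓ ∈ Finset.Icc 1 N, (μ[fun ω' => ξ ℓ ω' ^ (2 * p)|ℱ (ℓ - 1)]) ω ∂μ) :=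
  product_conditional_cauchy_schwarz_general μ ℱ ξ hξ_nonneg hξ_meas p N hint₂ hint₃ hpos
end

section
/- Let b > 0 and let (α_k)_{k≥0} be a non-increasing sequence of positive reals with α_0 < 1/(2b). Assume there exists κ with 0 < κ ≤ b/2 such that α_k − α_{k+1} ≤ κ α_{k+1}² for all k ≥ 0. Then for every p ∈ (1,2] and every n ∈ ℕ: Σ_{k=1}^{n+1} α_k^{p} ∏_{j=k+1}^{n+1} (1 − b α_j) ≤ (2/b) α_{n+1}^{p−1}. -/
/-- Let `b > 0` and `(α_k)` be a non-increasing positive sequence with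
`α 0 < 1/(2b)`, and assume there is `0 < κ ≤ b/2` with `α k − α (k+1) ≤ κ * α (k+1)^2`
for all `k`. Then for every `p ∈ (1,2]` and `n ∈ ℕ`,
`∑_{k=1}^{n+1} (α k)^p ∏_{j=k+1}^{n+1} (1 − b α j) ≤ (2/b) (α (n+1))^(p−1)`. -/
theorem stepsize_weighted_sum_bound (b κ : ℝ) (α : ℕ → ℝ)
    (hb : 0 < b)
    (hmono : ∀ k, α (k + 1) ≤ α k) (hpos : ∀ k, 0 < α k)
    (h0 : α 0 < 1 / (2 * b))
    (hκ0 : 0 < κ) (hκ : κ ≤ b / 2)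
    (hdiff : ∀ k, α k - α (k + 1) ≤ κ * α (k + 1) ^ 2)
    (p : ℝ) (hp1 : 1 < p) (hp2 : p ≤ 2) (n : ℕ) :
    ∑ k ∈ Finset.Icc 1 (n + 1), α k ^ p * ∏ j ∈ Finset.Icc (k + 1) (n + 1), (1 - b * α j) ≤
      (2 / b) * α (n + 1) ^ (p - 1) := by
  have hαle : ∀ k, α k ≤ α 0 := by
    intro k
    induction k with
    | zero => exact le_refl _
    | succ m ih => exact le_trans (hmono m) ih
  have hsmall : ∀ k, b * α k < 1 / 2 := by
    intro k
    have h1 : α k < 1 / (2 * b) := lt_of_le_of_lt (hαle k) h0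
    have h2 : b * α k < b * (1 / (2 * b)) := mul_lt_mul_of_pos_left h1 hb
    have h3 : b * (1 / (2 * b)) = 1 / 2 := by field_simp
    linarith
  have hfac : ∀ k, 0 < 1 - b * α k := by
    intro k; have := hsmall k; linarith
  have hrpow : ∀ k, α k ^ p = α k ^ (p - 1) * α k := by
    intro k
    have h := Real.rpow_add (hpos k) (p - 1) 1
    simp only [sub_add_cancel, Real.rpow_one] at h
    exact h

  induction n with
  | zero =>
    have hempty : Finset.Icc (1 + 1) 1 = (∅ : Finset ℕ) := by decide
    rw [show (0 : ℕ) + 1 = 1 from rfl, Finset.Icc_self, Finset.sum_singleton, hempty,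
      Finset.prod_empty, mul_one, hrpow 1]
    have ha : (0:ℝ) < α 1 ^ (p - 1) := Real.rpow_pos_of_pos (hpos 1) _
    have h1 : α 1 ≤ 2 / b := by
      have := hsmall 1
      have hb' : 0 < b := hb
      rw [le_div_iff₀ hb']
      nlinarith [hpos 1]
    nlinarith
  | succ n ih =>
    set a := α (n + 2) with ha_def
    have hapos : 0 < a := hpos (n + 2)
    have hApos : 0 < α (n + 1) := hpos (n + 1)
    have hrec : ∑ k ∈ Finset.Icc 1 (n + 1 + 1),
        α k ^ p * ∏ j ∈ Finset.Icc (k + 1) (n + 1 + 1), (1 - b * α j)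
        = (1 - b * a) * (∑ k ∈ Finset.Icc 1 (n + 1),
            α k ^ p * ∏ j ∈ Finset.Icc (k + 1) (n + 1), (1 - b * α j)) + a ^ p := by
      rw [Finset.sum_Icc_succ_top (by omega : (1:ℕ) ≤ n + 1 + 1)]
      have he : Finset.Icc (n + 1 + 1 + 1) (n + 1 + 1) = (∅ : Finset ℕ) := by
        apply Finset.Icc_eq_empty; omega
      rw [he, Finset.prod_empty, mul_one, Finset.mul_sum]
      congr 1
      apply Finset.sum_congr rfl
      intro k hk
      have hk' : k + 1 ≤ n + 1 + 1 := by
        have := (Finset.mem_Icc.mp hk).2; omega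
      rw [Finset.prod_Icc_succ_top hk']
      ring
    rw [hrec]
    have hc : 0 < 1 - b * a := hfac (n + 2)
    -- bound on α (n+1) ^ (p-1)
    have hA : α (n + 1) ≤ a * (1 + κ * a) := by
      have := hdiff (n + 1)
      nlinarith
    have h1a : (1:ℝ) ≤ 1 + κ * a := by nlinarith
    have hXnn : (0:ℝ) ≤ a ^ (p - 1) := Real.rpow_nonneg hapos.le _
    have hApow : α (n + 1) ^ (p - 1) ≤ a ^ (p - 1) * (1 + κ * a) := by
      calc α (n + 1) ^ (p - 1) ≤ (a * (1 + κ * a)) ^ (p - 1) :=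
            Real.rpow_le_rpow hApos.le hA (by linarith)
        _ = a ^ (p - 1) * (1 + κ * a) ^ (p - 1) :=
            Real.mul_rpow hapos.le (by linarith)
        _ ≤ a ^ (p - 1) * (1 + κ * a) := by
            have h := Real.rpow_le_rpow_of_exponent_le h1a (by linarith : p - 1 ≤ 1)
            rw [Real.rpow_one] at h
            exact mul_le_mul_of_nonneg_left h hXnn
    have step1 : (1 - b * a) * (∑ k ∈ Finset.Icc 1 (n + 1),
          α k ^ p * ∏ j ∈ Finset.Icc (k + 1) (n + 1), (1 - b * α j)) + a ^ p
        ≤ (1 - b * a) * ((2 / b) * (a ^ (p - 1) * (1 + κ * a))) + a ^ (p - 1) * a := by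
      rw [← hrpow (n + 2)]
      have h2b : (0:ℝ) < 2 / b := by positivity
      have := mul_le_mul_of_nonneg_left
        (le_trans ih (mul_le_mul_of_nonneg_left hApow h2b.le)) hc.le
      linarith
    refine le_trans step1 ?_
    have hscal : (1 - b * a) * ((2 / b) * (1 + κ * a)) + a ≤ 2 / b := by
      have hq : (1 - b * a) * ((2 / b) * (1 + κ * a))
          = (2 / b) * ((1 - b * a) * (1 + κ * a)) := by ring
      have h1 : (1 - b * a) * (1 + κ * a) ≤ 1 - (b / 2) * a := by
        nlinarith [mul_nonneg (mul_nonneg hb.le hκ0.le) (sq_nonneg a),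
          mul_le_mul_of_nonneg_right hκ hapos.le]
      have h2 : (2 / b) * ((1 - b * a) * (1 + κ * a)) ≤ (2 / b) * (1 - (b / 2) * a) :=
        mul_le_mul_of_nonneg_left h1 (by positivity)
      have h3 : (2 / b) * (1 - (b / 2) * a) = 2 / b - a := by field_simp
      linarith [hq ▸ h2, h3 ▸ h2]
    calc (1 - b * a) * ((2 / b) * (a ^ (p - 1) * (1 + κ * a))) + a ^ (p - 1) * a
        = ((1 - b * a) * ((2 / b) * (1 + κ * a)) + a) * a ^ (p - 1) := by ring
      _ ≤ (2 / b) * a ^ (p - 1) := mul_le_mul_of_nonneg_right hscal hXnn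
end

section
/- Let b > 0 and let (α_k)_{k≥0} be a non-increasing sequence of positive reals such that 𝒜_0 := Σ_{ℓ=0}^{∞} α_ℓ² < ∞, and set 𝒜_n = Σ_{ℓ=n}^{∞} α_ℓ². Assume there exists κ with 0 < κ ≤ b/4 such that α_0 ≤ 1/(2κ), α_0 < 1/(2b), α_k − α_{k+1} ≤ κ α_{k+1}² for all k ≥ 0, and α_k/𝒜_{k+1} ≤ (2/3)κ for all k ≥ 0. Then for every p ∈ (1,2], q ∈ [0,1], and n ∈ ℕ: Σ_{k=1}^{n+1} α_k^{p} 𝒜_k^{q} ∏_{j=k+1}^{n+1} (1 − b α_j) ≤ (2/b) α_{n+1}^{p−1} 𝒜_{n+1}^{q}. -/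
private lemma aux_scalar_ineq (s t : ℝ) (h0t : 0 ≤ t) (hts : t ≤ s / 4) (h0s : 0 ≤ s)
    (hs1 : 0 ≤ 1 - s) : (1 - s) * (1 + t) ^ 2 ≤ 1 - s / 2 := by
  nlinarith [mul_nonneg (sub_nonneg.mpr hts) hs1,
    mul_nonneg h0t (mul_nonneg (sub_nonneg.mpr hts) hs1),
    mul_nonneg h0s (mul_nonneg (sub_nonneg.mpr hts) hs1),
    mul_nonneg h0s (mul_nonneg h0s h0s), sq_nonneg s]


set_option maxHeartbeats 1000000 in
/-- Let `b > 0` and let `(α_k)` be a non-increasing positive sequence with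
square-summable terms; set `𝒜 n = ∑_{ℓ=n}^∞ (α ℓ)²`. Assume there is `0 < κ ≤ b/4` with
`α 0 ≤ 1/(2κ)`, `α 0 < 1/(2b)`, `α k − α (k+1) ≤ κ (α (k+1))²` and
`α k / 𝒜 (k+1) ≤ (2/3) κ` for all `k`. Then for every `p ∈ (1,2]`, `q ∈ [0,1]`, `n ∈ ℕ`,
`∑_{k=1}^{n+1} (α k)^p (𝒜 k)^q ∏_{j=k+1}^{n+1} (1 − b α j)
  ≤ (2/b) (α (n+1))^(p−1) (𝒜 (n+1))^q`. -/
theorem stepsize_weighted_tail_sum_bound (b κ : ℝ) (α : ℕ → ℝ)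
    (hb : 0 < b)
    (hmono : ∀ k, α (k + 1) ≤ α k) (hpos : ∀ k, 0 < α k)
    (hsq : Summable (fun ℓ => α ℓ ^ 2))
    (𝒜 : ℕ → ℝ) (h𝒜 : ∀ n, 𝒜 n = ∑' ℓ : ℕ, α (n + ℓ) ^ 2)
    (hκ0 : 0 < κ) (hκ : κ ≤ b / 4)
    (h0κ : α 0 ≤ 1 / (2 * κ)) (h0b : α 0 < 1 / (2 * b))
    (hdiff : ∀ k, α k - α (k + 1) ≤ κ * α (k + 1) ^ 2)
    (htail : ∀ k, α k / 𝒜 (k + 1) ≤ (2 / 3) * κ)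
    (p q : ℝ) (hp1 : 1 < p) (hp2 : p ≤ 2) (hq0 : 0 ≤ q) (hq1 : q ≤ 1) (n : ℕ) :
    ∑ k ∈ Finset.Icc 1 (n + 1),
        α k ^ p * 𝒜 k ^ q * ∏ j ∈ Finset.Icc (k + 1) (n + 1), (1 - b * α j) ≤
      (2 / b) * α (n + 1) ^ (p - 1) * 𝒜 (n + 1) ^ q := by
  have hanti : Antitone α := antitone_nat_of_succ_le hmono
  have hα0 : ∀ k, α k ≤ α 0 := fun k => hanti (Nat.zero_le k)
  have hsum : ∀ m, Summable (fun ℓ => α (m + ℓ) ^ 2) := by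
    intro m
    have h := (summable_nat_add_iff m).mpr hsq
    simpa [add_comm] using h
  have h𝒜pos : ∀ m, 0 < 𝒜 m := by
    intro m
    rw [h𝒜]
    have h0 : 0 < α (m + 0) ^ 2 := pow_pos (hpos _) 2
    exact lt_of_lt_of_le h0 (Summable.le_tsum (hsum m) 0 (fun j _ => sq_nonneg _))
  have hrec : ∀ m, 𝒜 m = α m ^ 2 + 𝒜 (m + 1) := by
    intro m
    rw [h𝒜 m, h𝒜 (m + 1), Summable.tsum_eq_zero_add (hsum m)]
    congr 1
    exact tsum_congr fun ℓ => by rw [show m + (ℓ + 1) = m + 1 + ℓ by omega]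
  -- key one-step inequality
  have hstep : ∀ m, (1 - b * α (m + 1)) * (α m ^ (p - 1) * 𝒜 m ^ q) ≤
      (1 - b / 2 * α (m + 1)) * (α (m + 1) ^ (p - 1) * 𝒜 (m + 1) ^ q) := by
    intro m
    have hApos := hpos m
    have hBpos := hpos (m + 1)
    have hBA : α (m + 1) ≤ α m := hmono m
    set A := α m
    set B := α (m + 1)
    have ht0 : 0 ≤ κ * B := by positivity
    have hBκ : B ≤ 1 / (2 * κ) := le_trans (hα0 (m + 1)) h0κ
    have htle : κ * B ≤ 1 / 2 := by
      rw [le_div_iff₀ (by positivity : (0:ℝ) < 2 * κ)] at hBκ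
      nlinarith
    have hbB : b * B < 1 / 2 := by
      have h1 : B ≤ α 0 := hα0 (m + 1)
      rw [lt_div_iff₀ (by positivity : (0:ℝ) < 2 * b)] at h0b
      nlinarith
    have hAB : A ≤ (1 + κ * B) * B := by
      have := hdiff m
      nlinarith
    have hA32 : A ≤ 3 / 2 * B := by nlinarith
    have h𝒜1pos := h𝒜pos (m + 1)
    have htail' : A ≤ 2 / 3 * κ * 𝒜 (m + 1) := by
      have h1 := htail m
      rw [div_le_iff₀ h𝒜1pos] at h1
      linarith
    have h𝒜le : 𝒜 m ≤ (1 + κ * B) * 𝒜 (m + 1) := by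
      have h2 : A ^ 2 ≤ κ * B * 𝒜 (m + 1) := by nlinarith
      rw [hrec m]; nlinarith
    have h1t : (1:ℝ) ≤ 1 + κ * B := by linarith
    have hrpowA : A ^ (p - 1) ≤ (1 + κ * B) * B ^ (p - 1) := by
      have h1 : A ^ (p - 1) ≤ ((1 + κ * B) * B) ^ (p - 1) :=
        Real.rpow_le_rpow hApos.le hAB (by linarith)
      rw [Real.mul_rpow (by linarith) hBpos.le] at h1
      have h2 : (1 + κ * B) ^ (p - 1) ≤ 1 + κ * B := by
        calc (1 + κ * B) ^ (p - 1) ≤ (1 + κ * B) ^ (1:ℝ) :=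
              Real.rpow_le_rpow_of_exponent_le h1t (by linarith)
          _ = 1 + κ * B := Real.rpow_one _
      have h3 := Real.rpow_nonneg hBpos.le (p - 1)
      nlinarith
    have hrpow𝒜 : 𝒜 m ^ q ≤ (1 + κ * B) * 𝒜 (m + 1) ^ q := by
      have h1 : 𝒜 m ^ q ≤ ((1 + κ * B) * 𝒜 (m + 1)) ^ q :=
        Real.rpow_le_rpow (h𝒜pos m).le h𝒜le hq0
      rw [Real.mul_rpow (by linarith) h𝒜1pos.le] at h1
      have h2 : (1 + κ * B) ^ q ≤ 1 + κ * B := by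
        calc (1 + κ * B) ^ q ≤ (1 + κ * B) ^ (1:ℝ) :=
              Real.rpow_le_rpow_of_exponent_le h1t hq1
          _ = 1 + κ * B := Real.rpow_one _
      have h3 := Real.rpow_nonneg h𝒜1pos.le q
      nlinarith
    have hBp : 0 ≤ B ^ (p - 1) := Real.rpow_nonneg hBpos.le _
    have h𝒜q : 0 ≤ 𝒜 (m + 1) ^ q := Real.rpow_nonneg h𝒜1pos.le _
    have hmul : A ^ (p - 1) * 𝒜 m ^ q ≤
        (1 + κ * B) ^ 2 * (B ^ (p - 1) * 𝒜 (m + 1) ^ q) := by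
      have h := mul_le_mul hrpowA hrpow𝒜 (Real.rpow_nonneg (h𝒜pos m).le q)
        (by positivity)
      calc A ^ (p - 1) * 𝒜 m ^ q
          ≤ ((1 + κ * B) * B ^ (p - 1)) * ((1 + κ * B) * 𝒜 (m + 1) ^ q) := h
        _ = (1 + κ * B) ^ 2 * (B ^ (p - 1) * 𝒜 (m + 1) ^ q) := by ring
    have hκB : κ * B ≤ b / 4 * B := mul_le_mul_of_nonneg_right hκ hBpos.le
    have h1bB : 0 ≤ 1 - b * B := by linarith
    have hs0 : 0 ≤ b * B := by positivity
    have hscalar : (1 - b * B) * (1 + κ * B) ^ 2 ≤ 1 - b / 2 * B := by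
      have h := aux_scalar_ineq (b * B) (κ * B) ht0 (by linarith) hs0 h1bB
      linarith
    calc (1 - b * B) * (A ^ (p - 1) * 𝒜 m ^ q)
        ≤ (1 - b * B) * ((1 + κ * B) ^ 2 * (B ^ (p - 1) * 𝒜 (m + 1) ^ q)) :=
          mul_le_mul_of_nonneg_left hmul h1bB
      _ = ((1 - b * B) * (1 + κ * B) ^ 2) * (B ^ (p - 1) * 𝒜 (m + 1) ^ q) := by ring
      _ ≤ (1 - b / 2 * B) * (B ^ (p - 1) * 𝒜 (m + 1) ^ q) :=
          mul_le_mul_of_nonneg_right hscalar (by positivity)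
  have hα2b : ∀ k, α k ≤ 2 / b := by
    intro k
    have h1 : α k ≤ α 0 := hα0 k
    rw [lt_div_iff₀ (by positivity : (0:ℝ) < 2 * b)] at h0b
    rw [le_div_iff₀ hb]
    nlinarith
  induction n with
  | zero =>
      rw [show (0:ℕ) + 1 = 1 from rfl, Finset.Icc_self, Finset.sum_singleton,
        Finset.Icc_eq_empty (by omega), Finset.prod_empty, mul_one]
      have hxp : α 1 ^ p = α 1 ^ (p - 1) * α 1 := by
        have h := Real.rpow_add (hpos 1) (p - 1) 1
        rw [Real.rpow_one, show p - 1 + 1 = p by ring] at h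
        exact h
      rw [hxp]
      have h1 : 0 ≤ α 1 ^ (p - 1) := Real.rpow_nonneg (hpos 1).le _
      have h2 : 0 ≤ 𝒜 1 ^ q := Real.rpow_nonneg (h𝒜pos 1).le _
      have h3 : α 1 ≤ 2 / b := hα2b 1
      calc α 1 ^ (p - 1) * α 1 * 𝒜 1 ^ q
          ≤ α 1 ^ (p - 1) * (2 / b) * 𝒜 1 ^ q :=
            mul_le_mul_of_nonneg_right (mul_le_mul_of_nonneg_left h3 h1) h2
        _ = 2 / b * α 1 ^ (p - 1) * 𝒜 1 ^ q := by ring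
  | succ n ih =>
      rw [Finset.sum_Icc_succ_top (by omega : 1 ≤ n + 1 + 1)]
      have hsplit : ∀ k ∈ Finset.Icc 1 (n + 1),
          α k ^ p * 𝒜 k ^ q * ∏ j ∈ Finset.Icc (k + 1) (n + 1 + 1), (1 - b * α j)
          = (α k ^ p * 𝒜 k ^ q * ∏ j ∈ Finset.Icc (k + 1) (n + 1), (1 - b * α j)) *
            (1 - b * α (n + 1 + 1)) := by
        intro k hk
        rw [Finset.mem_Icc] at hk
        rw [Finset.prod_Icc_succ_top (by omega : k + 1 ≤ n + 1 + 1)]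
        ring
      rw [Finset.sum_congr rfl hsplit, ← Finset.sum_mul,
        Finset.Icc_eq_empty (by omega : ¬ (n + 1 + 1 + 1 ≤ n + 1 + 1)),
        Finset.prod_empty, mul_one]
      set B := α (n + 1 + 1) with hBdef
      have hBpos := hpos (n + 1 + 1)
      have hbB : b * B < 1 / 2 := by
        have h1 : B ≤ α 0 := hα0 (n + 1 + 1)
        rw [lt_div_iff₀ (by positivity : (0:ℝ) < 2 * b)] at h0b
        nlinarith
      have hg : 0 ≤ 1 - b * B := by linarith
      have h1 : (∑ k ∈ Finset.Icc 1 (n + 1),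
          α k ^ p * 𝒜 k ^ q * ∏ j ∈ Finset.Icc (k + 1) (n + 1), (1 - b * α j)) *
          (1 - b * B) ≤ (2 / b * α (n + 1) ^ (p - 1) * 𝒜 (n + 1) ^ q) * (1 - b * B) :=
        mul_le_mul_of_nonneg_right ih hg
      have h2 := hstep (n + 1)
      have h2' : (2 / b) * ((1 - b * B) * (α (n + 1) ^ (p - 1) * 𝒜 (n + 1) ^ q)) ≤
          (2 / b) * ((1 - b / 2 * B) * (B ^ (p - 1) * 𝒜 (n + 1 + 1) ^ q)) :=
        mul_le_mul_of_nonneg_left h2 (by positivity)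
      have hxp : B ^ p = B ^ (p - 1) * B := by
        have h := Real.rpow_add hBpos (p - 1) 1
        rw [Real.rpow_one, show p - 1 + 1 = p by ring] at h
        exact h
      have hfin : (2 / b) * ((1 - b / 2 * B) * (B ^ (p - 1) * 𝒜 (n + 1 + 1) ^ q)) +
          B ^ p * 𝒜 (n + 1 + 1) ^ q = 2 / b * B ^ (p - 1) * 𝒜 (n + 1 + 1) ^ q := by
        rw [hxp]
        field_simp
        ring
      calc (∑ k ∈ Finset.Icc 1 (n + 1),
              α k ^ p * 𝒜 k ^ q * ∏ j ∈ Finset.Icc (k + 1) (n + 1), (1 - b * α j)) *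
              (1 - b * B) + B ^ p * 𝒜 (n + 1 + 1) ^ q
          ≤ (2 / b * α (n + 1) ^ (p - 1) * 𝒜 (n + 1) ^ q) * (1 - b * B) +
              B ^ p * 𝒜 (n + 1 + 1) ^ q := by linarith
        _ = (2 / b) * ((1 - b * B) * (α (n + 1) ^ (p - 1) * 𝒜 (n + 1) ^ q)) +
              B ^ p * 𝒜 (n + 1 + 1) ^ q := by ring
        _ ≤ (2 / b) * ((1 - b / 2 * B) * (B ^ (p - 1) * 𝒜 (n + 1 + 1) ^ q)) +
              B ^ p * 𝒜 (n + 1 + 1) ^ q := by linarith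
        _ = 2 / b * B ^ (p - 1) * 𝒜 (n + 1 + 1) ^ q := hfin
end

section
/- Let (Ω, 𝓕, ℙ) be a probability space, d ≥ 1, τ ≥ 1, and let ψ_0, ψ_1, …, ψ_τ : Ω → ℝ^d be square-integrable random vectors whose second-moment structure is stationary, i.e., E[ψ_i ψ_{i+ℓ}ᵀ] = E[ψ_0 ψ_ℓᵀ] whenever 0 ≤ i and i + ℓ ≤ τ. Let γ ∈ (0,1) and λ ∈ [0,1], and define the d×d matrix A = Σ_{ℓ=0}^{τ−1} (λγ)^{ℓ} E[ ψ_{τ−1−ℓ} (ψ_{τ−1} − γ ψ_τ)ᵀ ] and M = E[ψ_0 ψ_0ᵀ]. Then for every x ∈ ℝ^d: xᵀAx ≥ ((1−γ)/(1−λγ)) (1 − (λγ)^{τ}) · xᵀMx. In particular, if M is positive definite, then every eigenvalue of A (as a complex matrix) has strictly positive real part. -/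
/-!
Fix `x` and put `c ℓ = xᵀ E[ψ₀ ψ_ℓᵀ] x`. Stationarity turns `xᵀ A x` into
`∑_{ℓ<τ} (λγ)^ℓ (c ℓ - γ c (ℓ+1))`, and `c ℓ = E[(xᵀψ_i)(xᵀψ_{i+ℓ})] ≤ c 0` by AM-GM, both
factors having second moment `c 0`. Since `λγ ≤ γ`, the `ℓ`-th summand exceeds `(1-γ)(λγ)^ℓ c 0`
by at least the increment of `(λγ)^ℓ (c 0 - c ℓ)` from `ℓ` to `ℓ+1`; these telescope to
`(λγ)^τ (c 0 - c τ) ≥ 0`, and `∑_{ℓ<τ} (λγ)^ℓ` is the geometric sum.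

For the spectrum: if `A v = z v` with `v = u + i w ≠ 0`, then `Re (v* A v) = uᵀAu + wᵀAw > 0` while
`v* A v = z ‖v‖²`, so `Re z > 0`.
-/

open Matrix MeasureTheory
open scoped ComplexOrder

section SecondMoment
variable {Ω ι : Type*} [MeasurableSpace Ω] [Fintype ι]

noncomputable def secondMoment (μ : Measure Ω) (f g : Ω → ι → ℝ) : Matrix ι ι ℝ :=
  of fun a b => ∫ ω, f ω a * g ω b ∂μ

variable {μ : Measure Ω}

theorem memLp_dotProduct {p : ENNReal} {f : Ω → ι → ℝ} (hf : ∀ a, MemLp (fun ω => f ω a) p μ)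
    (x : ι → ℝ) : MemLp (fun ω => x ⬝ᵥ f ω) p μ :=
  memLp_finsetSum _ fun a _ => (hf a).const_mul (x a)

theorem dotProduct_secondMoment_mulVec {f g : Ω → ι → ℝ}
    (hfg : ∀ a b, Integrable (fun ω => f ω a * g ω b) μ) (x : ι → ℝ) :
    x ⬝ᵥ (secondMoment μ f g *ᵥ x) = ∫ ω, (x ⬝ᵥ f ω) * (x ⬝ᵥ g ω) ∂μ := by
  have hint : ∀ a b, Integrable (fun ω => x a * f ω a * (x b * g ω b)) μ := fun a b => by
    simpa only [mul_mul_mul_comm] using (hfg a b).const_mul (x a * x b)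
  simp only [dotProduct, Finset.sum_mul_sum]
  rw [integral_finsetSum _ fun a _ => integrable_finsetSum _ fun b _ => hint a b]
  refine Finset.sum_congr rfl fun a _ => ?_
  rw [integral_finsetSum _ fun b _ => hint a b, mulVec, dotProduct, Finset.mul_sum]
  refine Finset.sum_congr rfl fun b _ => ?_
  rw [secondMoment, of_apply, ← integral_mul_const, ← integral_const_mul]
  congr 1 with ω
  ring

theorem integral_mul_le_half_add {f g : Ω → ℝ} (hf : MemLp f 2 μ) (hg : MemLp g 2 μ) :
    ∫ ω, f ω * g ω ∂μ ≤ (∫ ω, f ω * f ω ∂μ + ∫ ω, g ω * g ω ∂μ) / 2 := by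
  have hff : Integrable (fun ω => f ω * f ω) μ := hf.integrable_mul hf
  have hgg : Integrable (fun ω => g ω * g ω) μ := hg.integrable_mul hg
  rw [← integral_add hff hgg, ← integral_div]
  refine integral_mono (hf.integrable_mul hg) ((hff.add hgg).div_const 2) fun ω => ?_
  nlinarith [sq_nonneg (f ω - g ω)]

theorem dotProduct_secondMoment_mulVec_le {f g : Ω → ι → ℝ}
    (hf : ∀ a, MemLp (fun ω => f ω a) 2 μ) (hg : ∀ a, MemLp (fun ω => g ω a) 2 μ) (x : ι → ℝ) :
    x ⬝ᵥ (secondMoment μ f g *ᵥ x) ≤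
      (x ⬝ᵥ (secondMoment μ f f *ᵥ x) + x ⬝ᵥ (secondMoment μ g g *ᵥ x)) / 2 := by
  simp only [dotProduct_secondMoment_mulVec fun a b => (hf a).integrable_mul (hg b),
    dotProduct_secondMoment_mulVec fun a b => (hf a).integrable_mul (hf b),
    dotProduct_secondMoment_mulVec fun a b => (hg a).integrable_mul (hg b)]
  exact integral_mul_le_half_add (memLp_dotProduct hf x) (memLp_dotProduct hg x)

end SecondMoment

namespace Matrix
variable {n : Type*} [Fintype n]

theorem re_star_dotProduct_map_ofReal_mulVec (A : Matrix n n ℝ) (v : n → ℂ) :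
    (star v ⬝ᵥ (A.map Complex.ofReal *ᵥ v)).re =
      (fun a => (v a).re) ⬝ᵥ (A *ᵥ fun a => (v a).re) +
        (fun a => (v a).im) ⬝ᵥ (A *ᵥ fun a => (v a).im) := by
  simp only [dotProduct, mulVec, Complex.re_sum, Complex.mul_re, map_apply,
    Pi.star_apply, Complex.star_def, Complex.conj_re, Complex.conj_im, Complex.ofReal_re,
    Complex.ofReal_im, Complex.im_ofReal_mul, Finset.mul_sum, ← Finset.sum_add_distrib]
  refine Finset.sum_congr rfl fun a _ => Finset.sum_congr rfl fun b _ => ?_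
  ring

theorem re_pos_of_mem_spectrum_map_ofReal [DecidableEq n] {A : Matrix n n ℝ}
    (hA : ∀ x ≠ 0, 0 < x ⬝ᵥ (A *ᵥ x)) {z : ℂ} (hz : z ∈ spectrum ℂ (A.map Complex.ofReal)) :
    0 < z.re := by
  rw [← spectrum_toLin', ← Module.End.hasEigenvalue_iff_mem_spectrum] at hz
  obtain ⟨v, hv⟩ := hz.exists_hasEigenvector
  have hAv : A.map Complex.ofReal *ᵥ v = z • v := by
    simpa only [toLin'_apply] using hv.apply_eq_smul
  obtain ⟨hnorm_re, hnorm_im⟩ := Complex.pos_iff.mp (dotProduct_star_self_pos_iff.mpr hv.2)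
  have hnonneg : ∀ x, 0 ≤ x ⬝ᵥ (A *ᵥ x) := fun x => by
    rcases eq_or_ne x 0 with rfl | hx
    · simp
    · exact (hA x hx).le
  have hpos : 0 < (star v ⬝ᵥ (A.map Complex.ofReal *ᵥ v)).re := by
    rw [re_star_dotProduct_map_ofReal_mulVec]
    obtain ⟨a, ha⟩ := Function.ne_iff.mp hv.2
    have : (v a).re ≠ 0 ∨ (v a).im ≠ 0 := by
      contrapose! ha
      exact Complex.ext ha.1 ha.2
    rcases this with h | h
    · linarith [hA (fun a => (v a).re) fun h0 => h (congrFun h0 a), hnonneg fun a => (v a).im]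
    · linarith [hA (fun a => (v a).im) fun h0 => h (congrFun h0 a), hnonneg fun a => (v a).re]
  rw [hAv, dotProduct_smul, smul_eq_mul, Complex.mul_re, ← hnorm_im, mul_zero, sub_zero] at hpos
  exact pos_of_mul_pos_left hpos hnorm_re.le
end Matrix

theorem one_sub_mul_geom_sum_mul_le {r γ : ℝ} {c : ℕ → ℝ} {τ : ℕ} (hr0 : 0 ≤ r) (hrγ : r ≤ γ)
    (hc : ∀ ℓ ≤ τ, c ℓ ≤ c 0) :
    (1 - γ) * (∑ ℓ ∈ Finset.range τ, r ^ ℓ) * c 0 ≤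
      ∑ ℓ ∈ Finset.range τ, r ^ ℓ * (c ℓ - γ * c (ℓ + 1)) := by
  have hstep : ∀ ℓ ∈ Finset.range τ,
      r ^ (ℓ + 1) * (c 0 - c (ℓ + 1)) - r ^ ℓ * (c 0 - c ℓ) ≤
        r ^ ℓ * (c ℓ - γ * c (ℓ + 1)) - (1 - γ) * r ^ ℓ * c 0 := fun ℓ hℓ => by
    have hgap : 0 ≤ c 0 - c (ℓ + 1) := sub_nonneg.2 (hc _ (Finset.mem_range.1 hℓ))
    have hpow : r ^ (ℓ + 1) ≤ r ^ ℓ * γ := by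
      rw [pow_succ]; exact mul_le_mul_of_nonneg_left hrγ (pow_nonneg hr0 ℓ)
    nlinarith [mul_le_mul_of_nonneg_right hpow hgap]
  have htel := Finset.sum_le_sum hstep
  rw [Finset.sum_range_sub (fun ℓ => r ^ ℓ * (c 0 - c ℓ)), sub_self, mul_zero, sub_zero,
    Finset.sum_sub_distrib] at htel
  rw [Finset.mul_sum, Finset.sum_mul]
  linarith [mul_nonneg (pow_nonneg hr0 τ) (sub_nonneg.2 (hc τ le_rfl))]

theorem dotProduct_sum_smul_sub_mulVec {n : Type*} [Fintype n] {E : ℕ → ℕ → Matrix n n ℝ}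
    {τ : ℕ} (hstat : ∀ i ℓ, i + ℓ ≤ τ → E i (i + ℓ) = E 0 ℓ) (r γ : ℝ) (x : n → ℝ) :
    x ⬝ᵥ ((∑ ℓ ∈ Finset.range τ, r ^ ℓ • (E (τ - 1 - ℓ) (τ - 1) - γ • E (τ - 1 - ℓ) τ)) *ᵥ x) =
      ∑ ℓ ∈ Finset.range τ, r ^ ℓ * (x ⬝ᵥ (E 0 ℓ *ᵥ x) - γ * x ⬝ᵥ (E 0 (ℓ + 1) *ᵥ x)) := by
  rw [sum_mulVec, dotProduct_sum]
  refine Finset.sum_congr rfl fun ℓ hℓ => ?_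
  have hℓτ := Finset.mem_range.1 hℓ
  have h₀ : E (τ - 1 - ℓ) (τ - 1) = E 0 ℓ := by
    simpa [show τ - 1 - ℓ + ℓ = τ - 1 by omega] using hstat (τ - 1 - ℓ) ℓ (by omega)
  have h₁ : E (τ - 1 - ℓ) τ = E 0 (ℓ + 1) := by
    simpa [show τ - 1 - ℓ + (ℓ + 1) = τ by omega] using hstat (τ - 1 - ℓ) (ℓ + 1) (by omega)
  rw [h₀, h₁, smul_mulVec, sub_mulVec, smul_mulVec, dotProduct_smul, dotProduct_sub,
    dotProduct_smul, smul_eq_mul, smul_eq_mul]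

theorem td_matrix_positive_general {Ω : Type*} [MeasurableSpace Ω] (μ : Measure Ω)
    (d τ : ℕ) (hτ : 1 ≤ τ)
    (ψ : ℕ → Ω → (Fin d → ℝ))
    (hL2 : ∀ i, i ≤ τ → ∀ a, MemLp (fun ω => ψ i ω a) 2 μ)
    (E : ℕ → ℕ → Matrix (Fin d) (Fin d) ℝ)
    (hE : ∀ i j, E i j = Matrix.of (fun a b => ∫ ω, ψ i ω a * ψ j ω b ∂μ))
    (hstat : ∀ i ℓ, i + ℓ ≤ τ → E i (i + ℓ) = E 0 ℓ)
    (γ lam : ℝ) (hγ0 : 0 < γ) (hγ1 : γ < 1) (hlam0 : 0 ≤ lam) (hlam1 : lam ≤ 1)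
    (A M : Matrix (Fin d) (Fin d) ℝ)
    (hA : A = ∑ ℓ ∈ Finset.range τ,
        (lam * γ) ^ ℓ • (E (τ - 1 - ℓ) (τ - 1) - γ • E (τ - 1 - ℓ) τ))
    (hM : M = E 0 0) :
    (∀ x : Fin d → ℝ,
        ((1 - γ) / (1 - lam * γ)) * (1 - (lam * γ) ^ τ) * (x ⬝ᵥ (M *ᵥ x)) ≤
          x ⬝ᵥ (A *ᵥ x)) ∧
      (M.PosDef → ∀ z : ℂ, z ∈ spectrum ℂ (A.map (Complex.ofReal)) → 0 < z.re) := by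
  set r := lam * γ
  have hr0 : 0 ≤ r := mul_nonneg hlam0 hγ0.le
  have hrγ : r ≤ γ := mul_le_of_le_one_left hγ0.le hlam1
  have hr1 : r < 1 := hrγ.trans_lt hγ1
  have hE' : ∀ i j, E i j = secondMoment μ (ψ i) (ψ j) := hE
  have hcov : ∀ x, ∀ ℓ ≤ τ, x ⬝ᵥ (E 0 ℓ *ᵥ x) ≤ x ⬝ᵥ (E 0 0 *ᵥ x) := fun x ℓ hℓ => by
    have := dotProduct_secondMoment_mulVec_le (hL2 0 (Nat.zero_le τ)) (hL2 ℓ hℓ) x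
    rw [← hE', ← hE', ← hE', show E ℓ ℓ = E 0 0 by simpa using hstat ℓ 0 (by omega)] at this
    linarith
  have hgeom : (1 - γ) / (1 - r) * (1 - r ^ τ) = (1 - γ) * ∑ ℓ ∈ Finset.range τ, r ^ ℓ := by
    rw [← mul_neg_geom_sum]
    field_simp [(sub_pos.2 hr1).ne']
  have hquad : ∀ x, (1 - γ) / (1 - r) * (1 - r ^ τ) * (x ⬝ᵥ (M *ᵥ x)) ≤ x ⬝ᵥ (A *ᵥ x) :=
    fun x => by
      rw [hA, dotProduct_sum_smul_sub_mulVec hstat, hM, hgeom]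
      exact one_sub_mul_geom_sum_mul_le hr0 hrγ (hcov x)
  refine ⟨hquad, fun hMpd z hz => Matrix.re_pos_of_mem_spectrum_map_ofReal (fun x hx => ?_) hz⟩
  have hκ : 0 < (1 - γ) / (1 - r) * (1 - r ^ τ) :=
    mul_pos (div_pos (sub_pos.2 hγ1) (sub_pos.2 hr1)) (sub_pos.2 (pow_lt_one₀ hr0 hr1 (by omega)))
  exact (mul_pos hκ (hMpd.dotProduct_mulVec_pos hx)).trans_le (hquad x)

/-- Let `ψ_0, …, ψ_τ : Ω → ℝ^d` be square-integrable random vectors with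
stationary second-moment structure `E[ψ_i ψ_{i+ℓ}ᵀ] = E[ψ_0 ψ_ℓᵀ]` (for `i + ℓ ≤ τ`).
With `γ ∈ (0,1)`, `λ ∈ [0,1]`,
`A = ∑_{ℓ=0}^{τ−1} (λγ)^ℓ E[ψ_{τ−1−ℓ}(ψ_{τ−1} − γψ_τ)ᵀ]` and `M = E[ψ_0 ψ_0ᵀ]`, one has
`xᵀAx ≥ ((1−γ)/(1−λγ))(1−(λγ)^τ) xᵀMx` for all `x`; in particular if `M` is positive
definite then every eigenvalue of `A` has strictly positive real part. -/
theorem td_matrix_positive {Ω : Type*} [MeasurableSpace Ω] (μ : Measure Ω)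
    [IsProbabilityMeasure μ] (d τ : ℕ) (hd : 1 ≤ d) (hτ : 1 ≤ τ)
    (ψ : ℕ → Ω → (Fin d → ℝ))
    (hmeas : ∀ i, i ≤ τ → ∀ a, Measurable (fun ω => ψ i ω a))
    (hL2 : ∀ i, i ≤ τ → ∀ a, MemLp (fun ω => ψ i ω a) 2 μ)
    (E : ℕ → ℕ → Matrix (Fin d) (Fin d) ℝ)
    (hE : ∀ i j, E i j = Matrix.of (fun a b => ∫ ω, ψ i ω a * ψ j ω b ∂μ))
    (hstat : ∀ i ℓ, i + ℓ ≤ τ → E i (i + ℓ) = E 0 ℓ)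
    (γ lam : ℝ) (hγ0 : 0 < γ) (hγ1 : γ < 1) (hlam0 : 0 ≤ lam) (hlam1 : lam ≤ 1)
    (A M : Matrix (Fin d) (Fin d) ℝ)
    (hA : A = ∑ ℓ ∈ Finset.range τ,
        (lam * γ) ^ ℓ • (E (τ - 1 - ℓ) (τ - 1) - γ • E (τ - 1 - ℓ) τ))
    (hM : M = E 0 0) :
    (∀ x : Fin d → ℝ,
        ((1 - γ) / (1 - lam * γ)) * (1 - (lam * γ) ^ τ) * (x ⬝ᵥ (M *ᵥ x)) ≤
          x ⬝ᵥ (A *ᵥ x)) ∧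
      (M.PosDef → ∀ z : ℂ, z ∈ spectrum ℂ (A.map (Complex.ofReal)) → 0 < z.re) :=
  td_matrix_positive_general μ d τ hτ ψ hL2 E hE hstat γ lam hγ0 hγ1 hlam0 hlam1 A M hA hM
end

section
/- Let γ ∈ (0,1), λ ∈ [0,1], τ ∈ ℕ with τ ≥ 1, and let ρ : ℕ → ℝ satisfy ρ(0) = 1 and |ρ(ℓ)| ≤ 1 for all ℓ. Then Σ_{ℓ=0}^{τ−1} (λγ)^{ℓ} ( ρ(ℓ) − γ ρ(ℓ+1) ) ≥ ((1−γ)/(1−λγ)) ( 1 − (λγ)^{τ} ). -/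
/-- Let `γ ∈ (0,1)`, `λ ∈ [0,1]`, `τ ≥ 1`, and let `ρ : ℕ → ℝ` satisfy
`ρ 0 = 1` and `|ρ ℓ| ≤ 1` for all `ℓ`. Then
`∑_{ℓ=0}^{τ−1} (λγ)^ℓ (ρ ℓ − γ ρ (ℓ+1)) ≥ ((1−γ)/(1−λγ)) (1 − (λγ)^τ)`. -/
theorem td_correlation_sum_lower_bound (γ lam : ℝ) (τ : ℕ) (ρ : ℕ → ℝ)
    (hγ0 : 0 < γ) (hγ1 : γ < 1) (hlam0 : 0 ≤ lam) (hlam1 : lam ≤ 1)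
    (hτ : 1 ≤ τ) (hρ0 : ρ 0 = 1) (hρ : ∀ ℓ, |ρ ℓ| ≤ 1) :
    ((1 - γ) / (1 - lam * γ)) * (1 - (lam * γ) ^ τ) ≤
      ∑ ℓ ∈ Finset.range τ, (lam * γ) ^ ℓ * (ρ ℓ - γ * ρ (ℓ + 1)) := by
  set x := lam * γ with hxdef
  have hx0 : 0 ≤ x := mul_nonneg hlam0 hγ0.le
  have hx1 : x < 1 := lt_of_le_of_lt
    (by nlinarith : x ≤ γ) hγ1
  have hxne : (1 : ℝ) - x ≠ 0 := by linarith
  -- strengthened claim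
  have key : ∀ n : ℕ, ((1 - γ) / (1 - x)) * (1 - x ^ (n + 1)) ≤
      (∑ ℓ ∈ Finset.range (n + 1), x ^ ℓ * (ρ ℓ - γ * ρ (ℓ + 1)))
        + γ * x ^ n * (ρ (n + 1) - 1) := by
    intro n
    induction n with
    | zero =>
      have hT : ((1 - γ) / (1 - x)) * (1 - x ^ (0 + 1)) = 1 - γ := by
        rw [pow_one]; field_simp
      rw [hT, Finset.sum_range_one, hρ0]
      simp only [pow_zero]
      nlinarith [hρ 1]
    | succ n ih =>
      rw [Finset.sum_range_succ]
      have hT : ((1 - γ) / (1 - x)) * (1 - x ^ (n + 2)) =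
          ((1 - γ) / (1 - x)) * (1 - x ^ (n + 1)) + (1 - γ) * x ^ (n + 1) := by
        field_simp
        ring
      have hxn : (0:ℝ) ≤ x ^ n := pow_nonneg hx0 n
      have h1 := (abs_le.mp (hρ (n + 1))).2
      have h2 := (abs_le.mp (hρ (n + 1))).1
      have hlg : x = lam * γ := hxdef
      -- the increment inequality
      have hstep : (1 - γ) * x ^ (n + 1) ≤
          x ^ (n + 1) * (ρ (n + 1) - γ * ρ (n + 2))
            + γ * x ^ (n + 1) * (ρ (n + 2) - 1) - γ * x ^ n * (ρ (n + 1) - 1) := by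
        have : x ^ (n + 1) = x * x ^ n := by ring
        rw [this, hlg]
        nlinarith [mul_nonneg (mul_nonneg hγ0.le hxn) (sub_nonneg.mpr h1),
          mul_nonneg hγ0.le hxn]
      rw [hT]
      linarith
  have hsum := key (τ - 1)
  have hτ' : τ - 1 + 1 = τ := Nat.succ_pred_eq_of_pos hτ
  rw [hτ'] at hsum
  have hxn : (0:ℝ) ≤ γ * x ^ (τ - 1) := mul_nonneg hγ0.le (pow_nonneg hx0 _)
  have h1 := (abs_le.mp (hρ τ)).2
  nlinarith [mul_nonneg hxn (sub_nonneg.mpr h1)]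
end

section
/- Let P be a Markov kernel on a measurable space Z satisfying the super-Lyapunov drift condition: there are constants c > 0, b ≥ 1, δ ∈ (1/2, 1], R₀ ≥ 0 and a measurable function V : Z → [e, ∞) such that, setting W = log V, for every z ∈ Z one has PV(z) ≤ exp(−c W(z)^δ) V(z) if W(z) > R₀, and PV(z) ≤ b if W(z) ≤ R₀. Then for every γ with 0 < γ ≤ δ and every z ∈ Z: P(W^{γ+1−δ})(z) ≤ W(z)^{γ+1−δ} − c_γ W(z)^{γ} + b_γ · 1{W(z) ≤ R₀}, where c_γ = min(1, (γ+1−δ)c) and b_γ = (log b)^{γ+1−δ}. -/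
/-!
Two Jensen steps, for the concave functions `log` and `x ↦ x ^ α` with `α = γ + 1 - δ ∈ [0, 1]`,
give `P(W ^ α) ≤ (log K) ^ α` whenever `PV ≤ K`. Below `R₀` take `K = b`. Above `R₀`,
`log K = W - c W ^ δ`, and the tangent-line bound `(w - x) ^ α ≤ w ^ α - α x w ^ (α - 1)` of the
concave power turns this into `W ^ α - α c W ^ γ`.
-/

open MeasureTheory ProbabilityTheory Real

namespace Real

theorem rpow_sub_le_rpow_sub_mul_rpow_sub_one {w x p : ℝ} (hw : 0 < w) (hxw : x ≤ w)
    (hp0 : 0 ≤ p) (hp1 : p ≤ 1) : (w - x) ^ p ≤ w ^ p - p * x * w ^ (p - 1) := by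
  have hs : -1 ≤ -x / w := by rw [le_div_iff₀ hw]; linarith
  have hsplit : w - x = w * (1 + -x / w) := by field_simp; ring
  calc (w - x) ^ p = w ^ p * (1 + -x / w) ^ p := by
        rw [hsplit, mul_rpow hw.le (by linarith)]
    _ ≤ w ^ p * (1 + p * (-x / w)) :=
        mul_le_mul_of_nonneg_left (rpow_one_add_le_one_add_mul_self hs hp0 hp1) (by positivity)
    _ = w ^ p - p * x * w ^ (p - 1) := by rw [rpow_sub_one hw.ne']; field_simp; ring

theorem rpow_sub_mul_rpow_le {w c δ γ : ℝ} (hw : 0 < w) (hcw : c * w ^ δ ≤ w)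
    (hα0 : 0 ≤ γ + 1 - δ) (hγδ : γ ≤ δ) :
    (w - c * w ^ δ) ^ (γ + 1 - δ) ≤ w ^ (γ + 1 - δ) - (γ + 1 - δ) * c * w ^ γ := by
  have hpow_add : w ^ δ * w ^ (γ + 1 - δ - 1) = w ^ γ := by
    rw [← rpow_add hw]; congr 1; ring
  calc (w - c * w ^ δ) ^ (γ + 1 - δ)
      ≤ w ^ (γ + 1 - δ) - (γ + 1 - δ) * (c * w ^ δ) * w ^ (γ + 1 - δ - 1) :=
        rpow_sub_le_rpow_sub_mul_rpow_sub_one hw hcw hα0 (by linarith)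
    _ = w ^ (γ + 1 - δ) - (γ + 1 - δ) * c * w ^ γ := by rw [← hpow_add]; ring

end Real

section Jensen

variable {Ω : Type*} [MeasurableSpace Ω] {μ : Measure Ω} {f : Ω → ℝ}

theorem MeasureTheory.Integrable.log_of_one_le (hf : Integrable f μ) (hf1 : ∀ x, 1 ≤ f x) :
    Integrable (fun x => log (f x)) μ := by
  refine hf.mono' hf.aemeasurable.log.aestronglyMeasurable (.of_forall fun x => ?_)
  rw [norm_of_nonneg (log_nonneg (hf1 x))]
  linarith [log_le_sub_one_of_pos (zero_lt_one.trans_le (hf1 x))]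

variable [IsProbabilityMeasure μ]

theorem integral_log_le_log_integral (hf : Integrable f μ) (hf1 : ∀ x, 1 ≤ f x) :
    ∫ x, log (f x) ∂μ ≤ log (∫ x, f x ∂μ) := by
  have hconcave : ConcaveOn ℝ (Set.Ici 1) log :=
    strictConcaveOn_log_Ioi.concaveOn.subset (Set.Ici_subset_Ioi.2 one_pos) (convex_Ici 1)
  have hcont : ContinuousOn log (Set.Ici 1) :=
    continuousOn_log.mono fun x hx => (zero_lt_one.trans_le hx).ne'
  exact hconcave.le_map_integral hcont isClosed_Ici (.of_forall hf1) hf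
    (hf.log_of_one_le hf1)

theorem integral_rpow_le_rpow_integral {p : ℝ} (hp0 : 0 ≤ p) (hp1 : p ≤ 1)
    (hf : Integrable f μ) (hf0 : ∀ x, 0 ≤ f x) (hfp : Integrable (fun x => f x ^ p) μ) :
    ∫ x, f x ^ p ∂μ ≤ (∫ x, f x ∂μ) ^ p :=
  (concaveOn_rpow hp0 hp1).le_map_integral
    (fun x _ => (continuousAt_rpow_const x p (Or.inr hp0)).continuousWithinAt) isClosed_Ici
    (.of_forall hf0) hf hfp

theorem one_le_of_lintegral_ofReal_le {K : ℝ} (hf1 : ∀ x, 1 ≤ f x)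
    (hK : ∫⁻ x, ENNReal.ofReal (f x) ∂μ ≤ ENNReal.ofReal K) : 1 ≤ K := by
  have h : ENNReal.ofReal 1 ≤ ENNReal.ofReal K :=
    calc ENNReal.ofReal 1 = ∫⁻ _, ENNReal.ofReal 1 ∂μ := by simp
      _ ≤ ∫⁻ x, ENNReal.ofReal (f x) ∂μ := lintegral_mono fun x => ENNReal.ofReal_le_ofReal (hf1 x)
      _ ≤ ENNReal.ofReal K := hK
  exact (ENNReal.ofReal_le_ofReal_iff'.1 h).resolve_right (by norm_num)

theorem lintegral_ofReal_log_rpow_le {p K : ℝ} (hp0 : 0 ≤ p) (hp1 : p ≤ 1)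
    (hf : AEMeasurable f μ) (hf1 : ∀ x, 1 ≤ f x)
    (hK : ∫⁻ x, ENNReal.ofReal (f x) ∂μ ≤ ENNReal.ofReal K) :
    ∫⁻ x, ENNReal.ofReal (log (f x) ^ p) ∂μ ≤ ENNReal.ofReal (log K ^ p) := by
  have hf0 : ∀ x, 0 ≤ f x := fun x => zero_le_one.trans (hf1 x)
  have hlog0 : ∀ x, 0 ≤ log (f x) := fun x => log_nonneg (hf1 x)
  have hf_int : Integrable f μ := by
    refine ⟨hf.aestronglyMeasurable, ?_⟩
    rw [hasFiniteIntegral_iff_ofReal (.of_forall hf0)]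
    exact hK.trans_lt ENNReal.ofReal_lt_top
  have hint_le : ∫ x, f x ∂μ ≤ K := by
    rw [← ENNReal.ofReal_le_ofReal_iff (zero_le_one.trans (one_le_of_lintegral_ofReal_le hf1 hK)),
      ofReal_integral_eq_lintegral_ofReal hf_int (.of_forall hf0)]
    exact hK
  have hint_one : 1 ≤ ∫ x, f x ∂μ := by
    simpa using integral_mono (integrable_const 1) hf_int hf1
  have hpow_int : Integrable (fun x => log (f x) ^ p) μ := by
    refine hf_int.mono' (hf.log.pow_const p).aestronglyMeasurable (.of_forall fun x => ?_)
    rw [norm_of_nonneg (rpow_nonneg (hlog0 x) p)]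
    rcases le_or_gt (log (f x)) 1 with h | h
    · linarith [rpow_le_one (hlog0 x) h hp0, hf1 x]
    · calc log (f x) ^ p ≤ log (f x) ^ (1 : ℝ) := rpow_le_rpow_of_exponent_le h.le hp1
        _ ≤ f x := by rw [rpow_one]; linarith [log_le_sub_one_of_pos (zero_lt_one.trans_le (hf1 x))]
  have hjensen : ∫ x, log (f x) ^ p ∂μ ≤ log K ^ p :=
    calc ∫ x, log (f x) ^ p ∂μ ≤ (∫ x, log (f x) ∂μ) ^ p :=
          integral_rpow_le_rpow_integral hp0 hp1 (hf_int.log_of_one_le hf1) hlog0 hpow_int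
      _ ≤ log K ^ p := rpow_le_rpow (integral_nonneg hlog0)
          ((integral_log_le_log_integral hf_int hf1).trans
            (log_le_log (zero_lt_one.trans_le hint_one) hint_le)) hp0
  rw [← ofReal_integral_eq_lintegral_ofReal hpow_int (.of_forall fun x => rpow_nonneg (hlog0 x) p)]
  exact ENNReal.ofReal_le_ofReal hjensen

end Jensen

theorem polynomial_drift_from_super_lyapunov_general {Z : Type*} [MeasurableSpace Z]
    (P : Kernel Z Z) [IsMarkovKernel P]
    (V : Z → ℝ) (hVmeas : Measurable V) (hVe : ∀ z, Real.exp 1 ≤ V z)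
    (c b δ R₀ : ℝ)
    (hδ2 : δ ≤ 1)
    (W : Z → ℝ) (hW : W = fun z => Real.log (V z))
    (hdrift₁ : ∀ z, R₀ < W z →
      ∫⁻ y, ENNReal.ofReal (V y) ∂(P z) ≤
        ENNReal.ofReal (Real.exp (-c * W z ^ δ) * V z))
    (hdrift₂ : ∀ z, W z ≤ R₀ → ∫⁻ y, ENNReal.ofReal (V y) ∂(P z) ≤ ENNReal.ofReal b)
    (γ : ℝ) (hγ0 : 0 < γ) (hγδ : γ ≤ δ) :
    ∀ z : Z,
      ∫⁻ y, ENNReal.ofReal (W y ^ (γ + 1 - δ)) ∂(P z) ≤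
        ENNReal.ofReal
          (W z ^ (γ + 1 - δ) - min 1 ((γ + 1 - δ) * c) * W z ^ γ +
            Real.log b ^ (γ + 1 - δ) * (if W z ≤ R₀ then 1 else 0)) := by
  subst hW
  intro z
  set α := γ + 1 - δ
  set w := log (V z)
  have hV1 : ∀ y, 1 ≤ V y := fun y => (one_le_exp zero_le_one).trans (hVe y)
  have hw1 : 1 ≤ w := (le_log_iff_exp_le (zero_lt_one.trans_le (hV1 z))).2 (hVe z)
  have hjensen := fun K => lintegral_ofReal_log_rpow_le (μ := P z) (K := K)
    (by linarith : 0 ≤ α) (by linarith : α ≤ 1) hVmeas.aemeasurable hV1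
  split_ifs with hzR
  · refine (hjensen b (hdrift₂ z hzR)).trans (ENNReal.ofReal_le_ofReal ?_)
    have : min 1 (α * c) * w ^ γ ≤ w ^ α :=
      calc min 1 (α * c) * w ^ γ ≤ 1 * w ^ γ := by gcongr; exact min_le_left _ _
        _ ≤ w ^ α := by rw [one_mul]; exact rpow_le_rpow_of_exponent_le hw1 (by linarith)
    linarith
  · have hK := hdrift₁ z (not_le.1 hzR)
    have hlogK : log (exp (-c * w ^ δ) * V z) = w - c * w ^ δ := by
      rw [log_mul (exp_ne_zero _) (zero_lt_one.trans_le (hV1 z)).ne', log_exp]; ring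
    have hcw : c * w ^ δ ≤ w := by
      have := log_nonneg (one_le_of_lintegral_ofReal_le hV1 hK); linarith
    refine (hjensen _ hK).trans (ENNReal.ofReal_le_ofReal ?_)
    calc log (exp (-c * w ^ δ) * V z) ^ α = (w - c * w ^ δ) ^ α := by rw [hlogK]
      _ ≤ w ^ α - α * c * w ^ γ := rpow_sub_mul_rpow_le (by linarith) hcw (by linarith) hγδ
      _ ≤ w ^ α - min 1 (α * c) * w ^ γ + log b ^ α * 0 := by
          have := mul_le_mul_of_nonneg_right (min_le_right 1 (α * c)) (by positivity : 0 ≤ w ^ γ)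
          linarith

/-- Under the super-Lyapunov drift condition, for `0 < γ ≤ δ`,
`P(W^{γ+1−δ})(z) ≤ W(z)^{γ+1−δ} − c_γ W(z)^γ + b_γ 1{W(z) ≤ R₀}` with
`c_γ = min(1, (γ+1−δ)c)` and `b_γ = (log b)^{γ+1−δ}`. -/
theorem polynomial_drift_from_super_lyapunov {Z : Type*} [MeasurableSpace Z]
    (P : Kernel Z Z) [IsMarkovKernel P]
    (V : Z → ℝ) (hVmeas : Measurable V) (hVe : ∀ z, Real.exp 1 ≤ V z)
    (c b δ R₀ : ℝ) (hc : 0 < c) (hb : 1 ≤ b)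
    (hδ1 : 1 / 2 < δ) (hδ2 : δ ≤ 1) (hR₀ : 0 ≤ R₀)
    (W : Z → ℝ) (hW : W = fun z => Real.log (V z))
    (hdrift₁ : ∀ z, R₀ < W z →
      ∫⁻ y, ENNReal.ofReal (V y) ∂(P z) ≤
        ENNReal.ofReal (Real.exp (-c * W z ^ δ) * V z))
    (hdrift₂ : ∀ z, W z ≤ R₀ → ∫⁻ y, ENNReal.ofReal (V y) ∂(P z) ≤ ENNReal.ofReal b)
    (γ : ℝ) (hγ0 : 0 < γ) (hγδ : γ ≤ δ) :
    ∀ z : Z,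
      ∫⁻ y, ENNReal.ofReal (W y ^ (γ + 1 - δ)) ∂(P z) ≤
        ENNReal.ofReal
          (W z ^ (γ + 1 - δ) - min 1 ((γ + 1 - δ) * c) * W z ^ γ +
            Real.log b ^ (γ + 1 - δ) * (if W z ≤ R₀ then 1 else 0)) :=
  polynomial_drift_from_super_lyapunov_general P V hVmeas hVe c b δ R₀ hδ2 W hW hdrift₁ hdrift₂ γ
    hγ0 hγδ
end

section
/- Let A be a d×d real matrix, h ∈ ℕ with h ≥ 1, and β_1, …, β_h real numbers with 0 ≤ β_i ≤ β for all i, where β h ≤ 1. Then ‖ ∏_{i=1}^{h} (I_d − β_i A) − I_d + ( Σ_{i=1}^{h} β_i ) A ‖ ≤ (1/2) β² h² ‖A‖² e^{‖A‖}, where ‖·‖ is the spectral norm and the product is taken in any fixed order (the factors commute). -/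
/-!
Write `x_i = -β_i A`. In any normed ring with `‖1‖ ≤ 1` (not `NormOneClass`: on the zero space the
identity operator has norm `0`), peeling off the first factor gives
`(1 + x)P - 1 - (x + S) = (1 + x)(P - 1 - S) + xS`, so by induction the second-order remainder of
`∏ (1 + x_i)` is at most `s² / 2 · e^s` with `s = ∑ ‖x_i‖`; here `s ≤ β h ‖A‖ ≤ ‖A‖`.
-/

open Matrix

theorem norm_prod_one_add_sub_one_sub_sum_le {R : Type*} [NormedRing R] (hR : ‖(1 : R)‖ ≤ 1) :
    ∀ {n : ℕ} (x : Fin n → R),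
      ‖(List.ofFn fun i => 1 + x i).prod - 1 - ∑ i, x i‖ ≤
        (∑ i, ‖x i‖) ^ 2 / 2 * Real.exp (∑ i, ‖x i‖)
  | 0, _ => by simp
  | n + 1, x => by
    have ih := norm_prod_one_add_sub_one_sub_sum_le hR fun i => x i.succ
    set P := (List.ofFn fun i : Fin n => 1 + x i.succ).prod
    set S := ∑ i : Fin n, x i.succ
    set s := ∑ i : Fin n, ‖x i.succ‖
    set t := ‖x 0‖
    have hs : 0 ≤ s := by positivity
    have ht : 0 ≤ t := norm_nonneg _
    have hS : ‖S‖ ≤ s := norm_sum_le _ _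
    have hexp : (1 + t) * Real.exp s ≤ Real.exp (t + s) := by
      rw [Real.exp_add]; gcongr; linarith [Real.add_one_le_exp t]
    have hone : 1 ≤ Real.exp (t + s) := Real.one_le_exp (by positivity)
    rw [List.ofFn_succ, List.prod_cons, Fin.sum_univ_succ, Fin.sum_univ_succ]
    calc ‖(1 + x 0) * P - 1 - (x 0 + S)‖ = ‖(1 + x 0) * (P - 1 - S) + x 0 * S‖ := by
          congr 1; noncomm_ring
      _ ≤ (1 + t) * (s ^ 2 / 2 * Real.exp s) + t * s := by
          refine (norm_add_le _ _).trans (add_le_add ?_ ?_)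
          · exact (norm_mul_le _ _).trans (mul_le_mul ((norm_add_le _ _).trans (by linarith)) ih
              (norm_nonneg _) (by linarith))
          · exact (norm_mul_le _ _).trans (mul_le_mul_of_nonneg_left hS ht)
      _ ≤ s ^ 2 / 2 * Real.exp (t + s) + t * s * Real.exp (t + s) := by
          have hts : 0 ≤ t * s := mul_nonneg ht hs
          nlinarith [mul_le_mul_of_nonneg_left hexp (by positivity : (0 : ℝ) ≤ s ^ 2 / 2)]
      _ ≤ (t + s) ^ 2 / 2 * Real.exp (t + s) := by
          nlinarith [mul_nonneg (sq_nonneg t) (Real.exp_pos (t + s)).le]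

theorem specNorm_prod_one_add_sub_one_sub_sum_le {d n : ℕ} (X : Fin n → Matrix (Fin d) (Fin d) ℝ) :
    specNorm ((List.ofFn fun i => 1 + X i).prod - 1 - ∑ i, X i) ≤
      (∑ i, specNorm (X i)) ^ 2 / 2 * Real.exp (∑ i, specNorm (X i)) := by
  simpa [specNorm, map_list_prod, List.map_ofFn, Function.comp_def] using
    norm_prod_one_add_sub_one_sub_sum_le ContinuousLinearMap.norm_id_le
      fun i => Matrix.toEuclideanCLM (𝕜 := ℝ) (X i)

theorem specNorm_neg_smul_of_nonneg {d : ℕ} {c : ℝ} (hc : 0 ≤ c) (A : Matrix (Fin d) (Fin d) ℝ) :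
    specNorm (-(c • A)) = c * specNorm A := by
  simp only [specNorm, map_neg, map_smul, norm_neg]
  exact norm_smul_of_nonneg hc (Matrix.toEuclideanCLM (𝕜 := ℝ) A)

theorem deterministic_product_second_order_bound_general {d : ℕ} (A : Matrix (Fin d) (Fin d) ℝ)
    (h : ℕ) (β : ℝ) (βs : Fin h → ℝ)
    (hβs : ∀ i, 0 ≤ βs i ∧ βs i ≤ β) (hβh : β * (h : ℝ) ≤ 1) :
    specNorm
        ((List.ofFn (fun i : Fin h => (1 : Matrix (Fin d) (Fin d) ℝ) - βs i • A)).prod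
          - 1 + (∑ i, βs i) • A) ≤
      (1 / 2) * β ^ 2 * (h : ℝ) ^ 2 * specNorm A ^ 2 * Real.exp (specNorm A) := by
  set σ := ∑ i, βs i
  have hσ : 0 ≤ σ := Finset.sum_nonneg fun i _ => (hβs i).1
  have hσβ : σ ≤ β * h := by
    simpa [mul_comm] using Finset.sum_le_sum fun i (_ : i ∈ Finset.univ) => (hβs i).2
  have hexpr : (List.ofFn fun i => 1 - βs i • A).prod - 1 + σ • A =
      (List.ofFn fun i => 1 + -(βs i • A)).prod - 1 - ∑ i, -(βs i • A) := by
    simp [sub_eq_add_neg, σ, Finset.sum_smul]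
  have hnorms : ∑ i, specNorm (-(βs i • A)) = σ * specNorm A := by
    simp only [specNorm_neg_smul_of_nonneg (hβs _).1, σ, Finset.sum_mul]
  have hA : 0 ≤ specNorm A := norm_nonneg _
  calc _ ≤ (σ * specNorm A) ^ 2 / 2 * Real.exp (σ * specNorm A) := by
        rw [hexpr, ← hnorms]
        exact specNorm_prod_one_add_sub_one_sub_sum_le _
    _ ≤ (β * h * specNorm A) ^ 2 / 2 * Real.exp (specNorm A) := by
        gcongr
        nlinarith
    _ = _ := by ring

/-- For a `d×d` real matrix `A`, `h ≥ 1` and `0 ≤ β_i ≤ β` with `βh ≤ 1`,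
`‖∏_{i=1}^h (I − β_i A) − I + (∑_i β_i) A‖ ≤ (1/2) β² h² ‖A‖² e^{‖A‖}` in spectral norm. -/
theorem deterministic_product_second_order_bound {d : ℕ} (A : Matrix (Fin d) (Fin d) ℝ)
    (h : ℕ) (hh : 1 ≤ h) (β : ℝ) (βs : Fin h → ℝ)
    (hβs : ∀ i, 0 ≤ βs i ∧ βs i ≤ β) (hβh : β * (h : ℝ) ≤ 1) :
    specNorm
        ((List.ofFn (fun i : Fin h => (1 : Matrix (Fin d) (Fin d) ℝ) - βs i • A)).prod
          - 1 + (∑ i, βs i) • A) ≤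
      (1 / 2) * β ^ 2 * (h : ℝ) ^ 2 * specNorm A ^ 2 * Real.exp (specNorm A) :=
  deterministic_product_second_order_bound_general A h β βs hβs hβh
end

section
/- Let K ≥ 1, p ≥ 1, ε ∈ (0,1), h ∈ ℕ with h ≥ 1, β > 0, and let M_1, …, M_h be d×d real matrices and β_1, …, β_h reals with 0 ≤ β_i ≤ β for all i. Let R = ∏_{i=1}^{h} (I_d − β_i M_i) − I_d + Σ_{i=1}^{h} β_i M_i, where the product is the ordered matrix product (I_d − β_h M_h)···(I_d − β_1 M_1). Then ( 1 + K ‖R‖ )^{2p} ≤ exp( 2^{h+1} p (Kβ)^{1+ε} (1+ε)^{-1} Σ_{i=1}^{h} ‖M_i‖^{1+ε} ), where ‖·‖ is the spectral norm. -/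
/-!
Expanding `∏ (1 - aᵢ)` leaves, after `- 1 + ∑ aᵢ`, only monomials of degree at least two, so
`‖R‖` is dominated by the scalar remainder `F(a) = ∏ (1 + ‖aᵢ‖) - 1 - ∑ ‖aᵢ‖` (`prodRemainder`),
and `K · F(a) ≤ F(K a)` for `K ≥ 1` for the same reason. Put `cᵢ = Kβ‖Mᵢ‖`, `δ = 1 + ε` and
`S = ∑ cᵢ^δ`. If every `cᵢ ≤ 1`, then `cᵢ cⱼ ≤ (cᵢ² + cⱼ²)/2 ≤ (cᵢ^δ + cⱼ^δ)/2`, whence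
`F(c) ≤ (2^h - 1)/2 · S`, and `1 + x ≤ eˣ` finishes. If some `cⱼ ≥ 1`, then `S ≥ 1` dominates
every `cᵢ`, so `1 + F(c) ≤ ∏ (1 + cᵢ) ≤ exp (∑ cᵢ) ≤ exp (h S)`, and `h ≤ 2^h / 2`.
-/

open Matrix

open Finset

noncomputable def prodRemainder {ι : Type*} (s : Finset ι) (c : ι → ℝ) : ℝ :=
  ∏ i ∈ s, (1 + c i) - 1 - ∑ i ∈ s, c i

theorem two_mul_le_two_pow (n : ℕ) : 2 * n ≤ 2 ^ n := by
  cases n with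
  | zero => simp
  | succ n =>
    have := Nat.lt_two_pow_self (n := n)
    rw [pow_succ]
    omega

section prodRemainder

variable {ι : Type*} {s : Finset ι} {a c : ι → ℝ}

theorem prodRemainder_insert [DecidableEq ι] {j : ι} (hj : j ∉ s) :
    prodRemainder (insert j s) c = (1 + c j) * prodRemainder s c + c j * ∑ i ∈ s, c i := by
  simp only [prodRemainder, prod_insert hj, sum_insert hj]
  ring

theorem prodRemainder_univ_succ {n : ℕ} (c : Fin (n + 1) → ℝ) :
    prodRemainder univ c =
      (1 + c 0) * prodRemainder univ (fun i : Fin n => c i.succ) + c 0 * ∑ i : Fin n, c i.succ := by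
  simp only [prodRemainder, Fin.prod_univ_succ, Fin.sum_univ_succ]
  ring

theorem prodRemainder_nonneg (hc : ∀ i ∈ s, 0 ≤ c i) : 0 ≤ prodRemainder s c := by
  classical
  induction s using Finset.induction_on with
  | empty => simp [prodRemainder]
  | insert j s hj ih =>
    rw [forall_mem_insert] at hc
    rw [prodRemainder_insert hj]
    have := ih hc.2
    have := sum_nonneg hc.2
    have := hc.1
    positivity

theorem mul_prodRemainder_le {K : ℝ} (hK : 1 ≤ K) (ha : ∀ i ∈ s, 0 ≤ a i)
    (hac : ∀ i ∈ s, K * a i ≤ c i) : K * prodRemainder s a ≤ prodRemainder s c := by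
  classical
  induction s using Finset.induction_on with
  | empty => simp [prodRemainder]
  | insert j s hj ih =>
    have hle : ∀ i ∈ insert j s, a i ≤ c i := fun i hi =>
      (le_mul_of_one_le_left (ha i hi) hK).trans (hac i hi)
    rw [forall_mem_insert] at ha hac hle
    have hcj : 0 ≤ c j := ha.1.trans hle.1
    calc K * prodRemainder (insert j s) a
        = (1 + a j) * (K * prodRemainder s a) + K * a j * ∑ i ∈ s, a i := by
          rw [prodRemainder_insert hj]; ring
      _ ≤ (1 + c j) * prodRemainder s c + c j * ∑ i ∈ s, c i := by
          have hKa : 0 ≤ K * prodRemainder s a :=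
            mul_nonneg (by linarith) (prodRemainder_nonneg ha.2)
          exact add_le_add (mul_le_mul (by linarith [hle.1]) (ih ha.2 hac.2) hKa (by linarith))
            (mul_le_mul hac.1 (sum_le_sum hle.2) (sum_nonneg ha.2) hcj)
      _ = prodRemainder (insert j s) c := (prodRemainder_insert hj).symm

theorem mul_le_add_rpow_div_two {x y δ : ℝ} (hx : 0 ≤ x) (hx1 : x ≤ 1) (hy : 0 ≤ y)
    (hy1 : y ≤ 1) (hδ : 0 ≤ δ) (hδ2 : δ ≤ 2) : x * y ≤ (x ^ δ + y ^ δ) / 2 := by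
  have hsq : ∀ z : ℝ, 0 ≤ z → z ≤ 1 → z ^ 2 ≤ z ^ δ := fun z hz hz1 => by
    simpa using Real.rpow_le_rpow_of_exponent_ge' hz hz1 hδ hδ2
  nlinarith [sq_nonneg (x - y), hsq x hx hx1, hsq y hy hy1]

theorem prodRemainder_le_of_le_one {δ : ℝ} (hδ : 0 ≤ δ) (hδ2 : δ ≤ 2)
    (hc : ∀ i ∈ s, 0 ≤ c i ∧ c i ≤ 1) :
    prodRemainder s c ≤ (2 ^ #s - 1) / 2 * ∑ i ∈ s, c i ^ δ := by
  classical
  induction s using Finset.induction_on with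
  | empty => simp [prodRemainder]
  | insert j s hj ih =>
    rw [forall_mem_insert] at hc
    obtain ⟨⟨hj0, hj1⟩, hs⟩ := hc
    have hpair : c j * ∑ i ∈ s, c i ≤ (#s * c j ^ δ + ∑ i ∈ s, c i ^ δ) / 2 := by
      rw [mul_sum]
      calc ∑ i ∈ s, c j * c i ≤ ∑ i ∈ s, (c j ^ δ + c i ^ δ) / 2 :=
            sum_le_sum fun i hi => mul_le_add_rpow_div_two hj0 hj1 (hs i hi).1 (hs i hi).2 hδ hδ2
        _ = _ := by rw [← sum_div, sum_add_distrib, sum_const, nsmul_eq_mul]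
    have hcard : (#s : ℝ) + 1 ≤ 2 ^ #s := by exact_mod_cast Nat.lt_two_pow_self
    have := prodRemainder_nonneg fun i hi => (hs i hi).1
    have := sum_nonneg fun i (_ : i ∈ s) => Real.rpow_nonneg (hs i ‹_›).1 δ
    have := Real.rpow_nonneg hj0 δ
    rw [prodRemainder_insert hj, card_insert_of_notMem hj, sum_insert hj, pow_succ]
    nlinarith [ih hs]

theorem le_sum_rpow_of_one_le {δ : ℝ} (hδ : 1 ≤ δ) (hc : ∀ i ∈ s, 0 ≤ c i) {j : ι} (hj : j ∈ s)
    (hcj : 1 ≤ c j) {i : ι} (hi : i ∈ s) : c i ≤ ∑ k ∈ s, c k ^ δ := by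
  have hsingle : ∀ k ∈ s, c k ^ δ ≤ ∑ k ∈ s, c k ^ δ := fun k hk =>
    single_le_sum (fun k hk => Real.rpow_nonneg (hc k hk) δ) hk
  rcases le_total (c i) 1 with hci | hci
  · calc c i ≤ 1 := hci
      _ ≤ c j ^ δ := Real.one_le_rpow hcj (by linarith)
      _ ≤ _ := hsingle j hj
  · exact (Real.self_le_rpow_of_one_le hci hδ).trans (hsingle i hi)

theorem one_add_prodRemainder_le_exp {δ : ℝ} (hδ : 1 ≤ δ) (hδ2 : δ ≤ 2)
    (hc : ∀ i ∈ s, 0 ≤ c i) :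
    1 + prodRemainder s c ≤ Real.exp (2 ^ #s / δ * ∑ i ∈ s, c i ^ δ) := by
  have hS : 0 ≤ ∑ i ∈ s, c i ^ δ := sum_nonneg fun i hi => Real.rpow_nonneg (hc i hi) δ
  suffices 1 + prodRemainder s c ≤ Real.exp (2 ^ #s / 2 * ∑ i ∈ s, c i ^ δ) from
    this.trans (Real.exp_le_exp.mpr (by gcongr))
  by_cases hsmall : ∀ i ∈ s, c i ≤ 1
  · calc 1 + prodRemainder s c ≤ Real.exp (prodRemainder s c) := by
          linarith [Real.add_one_le_exp (prodRemainder s c)]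
      _ ≤ _ := by
          refine Real.exp_le_exp.mpr ((prodRemainder_le_of_le_one (by linarith) hδ2
            fun i hi => ⟨hc i hi, hsmall i hi⟩).trans ?_)
          gcongr
          linarith
  · push Not at hsmall
    obtain ⟨j, hj, hcj⟩ := hsmall
    have hcard : (#s : ℝ) ≤ 2 ^ #s / 2 := by
      rw [le_div_iff₀ two_pos, mul_comm]; exact_mod_cast two_mul_le_two_pow #s
    calc 1 + prodRemainder s c ≤ ∏ i ∈ s, (1 + c i) := by
          rw [prodRemainder]; linarith [sum_nonneg hc]
      _ ≤ ∏ i ∈ s, Real.exp (c i) := prod_le_prod (fun i hi => by linarith [hc i hi])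
          fun i _ => by linarith [Real.add_one_le_exp (c i)]
      _ = Real.exp (∑ i ∈ s, c i) := (Real.exp_sum s c).symm
      _ ≤ Real.exp (#s * ∑ i ∈ s, c i ^ δ) := by
          rw [Real.exp_le_exp, ← nsmul_eq_mul]
          exact sum_le_card_nsmul s c _ fun i hi => le_sum_rpow_of_one_le hδ hc hj hcj.le hi
      _ ≤ _ := by gcongr

end prodRemainder

theorem norm_prod_one_sub_sub_one_add_sum_le {A : Type*} [SeminormedRing A] :
    ∀ {n : ℕ} (a : Fin n → A),
      ‖(List.ofFn fun i => 1 - a i).reverse.prod - 1 + ∑ i, a i‖ ≤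
        prodRemainder univ fun i => ‖a i‖
  | 0, a => by simp [prodRemainder]
  | n + 1, a => by
    set R := (List.ofFn fun i : Fin n => 1 - a i.succ).reverse.prod - 1 + ∑ i : Fin n, a i.succ
    have hR := norm_prod_one_sub_sub_one_add_sum_le fun i : Fin n => a i.succ
    have hstep : (List.ofFn fun i => 1 - a i).reverse.prod - 1 + ∑ i, a i =
        R - R * a 0 + (∑ i : Fin n, a i.succ) * a 0 := by
      simp only [R, List.ofFn_succ, List.reverse_cons, List.prod_append, List.prod_singleton,
        Fin.sum_univ_succ]
      noncomm_ring
    rw [hstep, prodRemainder_univ_succ]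
    calc ‖R - R * a 0 + (∑ i : Fin n, a i.succ) * a 0‖
        ≤ ‖R‖ + ‖R‖ * ‖a 0‖ + (∑ i : Fin n, ‖a i.succ‖) * ‖a 0‖ := by
          refine (norm_add_le _ _).trans (add_le_add ((norm_sub_le _ _).trans ?_) ?_)
          · gcongr; exact norm_mul_le _ _
          · exact (norm_mul_le _ _).trans (by gcongr; exact norm_sum_le _ _)
      _ = (1 + ‖a 0‖) * ‖R‖ + ‖a 0‖ * ∑ i : Fin n, ‖a i.succ‖ := by ring
      _ ≤ _ := by gcongr

theorem specNorm_nonneg_s16 {d : ℕ} (A : Matrix (Fin d) (Fin d) ℝ) : 0 ≤ specNorm A :=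
  norm_nonneg _

theorem specNorm_prod_one_sub_sub_one_add_sum_le {d n : ℕ}
    (A : Fin n → Matrix (Fin d) (Fin d) ℝ) :
    specNorm ((List.ofFn fun i => 1 - A i).reverse.prod - 1 + ∑ i, A i) ≤
      prodRemainder univ fun i => specNorm (A i) := by
  simpa [specNorm, map_list_prod, List.map_reverse, List.map_ofFn, Function.comp_def] using
    norm_prod_one_sub_sub_one_add_sum_le fun i => toEuclideanCLM (𝕜 := ℝ) (A i)

theorem mul_specNorm_prod_one_sub_smul_le {d n : ℕ} {K β : ℝ} (hK : 1 ≤ K)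
    (M : Fin n → Matrix (Fin d) (Fin d) ℝ) {βs : Fin n → ℝ} (hβs : ∀ i, 0 ≤ βs i ∧ βs i ≤ β) :
    K * specNorm ((List.ofFn fun i => 1 - βs i • M i).reverse.prod - 1 + ∑ i, βs i • M i) ≤
      prodRemainder univ fun i => K * β * specNorm (M i) := by
  have hnorm : (prodRemainder univ fun i => specNorm (βs i • M i)) =
      prodRemainder univ fun i => βs i * specNorm (M i) := by
    congr 1; funext i
    simp [specNorm, norm_smul, abs_of_nonneg (hβs i).1]
  refine (mul_le_mul_of_nonneg_left (hnorm ▸ specNorm_prod_one_sub_sub_one_add_sum_le _)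
    (by linarith)).trans
    (mul_prodRemainder_le hK (fun i _ => mul_nonneg (hβs i).1 (specNorm_nonneg_s16 _)) fun i _ => ?_)
  rw [← mul_assoc]
  exact mul_le_mul_of_nonneg_right (mul_le_mul_of_nonneg_left (hβs i).2 (by linarith))
    (specNorm_nonneg_s16 _)

theorem remainder_product_bound_general {d : ℕ} (K p ε β : ℝ) (h : ℕ)
    (hK : 1 ≤ K) (hp : 1 ≤ p) (hε0 : 0 < ε) (hε1 : ε < 1)
    (M : Fin h → Matrix (Fin d) (Fin d) ℝ) (βs : Fin h → ℝ)
    (hβs : ∀ i, 0 ≤ βs i ∧ βs i ≤ β)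
    (R : Matrix (Fin d) (Fin d) ℝ)
    (hR : R = (List.ofFn (fun i : Fin h =>
          (1 : Matrix (Fin d) (Fin d) ℝ) - βs i • M i)).reverse.prod
        - 1 + ∑ i, βs i • M i) :
    (1 + K * specNorm R) ^ (2 * p) ≤
      Real.exp (2 ^ (h + 1) * p * (K * β) ^ (1 + ε) * (1 + ε)⁻¹ *
        ∑ i, specNorm (M i) ^ (1 + ε)) := by
  have hKβ : ∀ i : Fin h, 0 ≤ K * β := fun i =>
    mul_nonneg (by linarith) ((hβs i).1.trans (hβs i).2)
  have hRc := hR ▸ mul_specNorm_prod_one_sub_smul_le hK M hβs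
  have hexp := one_add_prodRemainder_le_exp (s := univ) (δ := 1 + ε) (by linarith) (by linarith)
    fun i _ => mul_nonneg (hKβ i) (specNorm_nonneg_s16 (M i))
  have hS : ∑ i, (K * β * specNorm (M i)) ^ (1 + ε) =
      (K * β) ^ (1 + ε) * ∑ i, specNorm (M i) ^ (1 + ε) := by
    rw [mul_sum]
    exact sum_congr rfl fun i _ => Real.mul_rpow (hKβ i) (specNorm_nonneg_s16 _)
  rw [card_univ, Fintype.card_fin, hS] at hexp
  calc (1 + K * specNorm R) ^ (2 * p)
      ≤ Real.exp (2 ^ h / (1 + ε) * ((K * β) ^ (1 + ε) * ∑ i, specNorm (M i) ^ (1 + ε)))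
          ^ (2 * p) :=
        Real.rpow_le_rpow (by nlinarith [specNorm_nonneg_s16 R]) (by linarith) (by linarith)
    _ = _ := by
        rw [← Real.exp_mul]
        ring_nf

/-- Let `K ≥ 1`, `p ≥ 1`, `ε ∈ (0,1)`, `h ≥ 1`, `β > 0`,
`M_1, …, M_h` real `d×d` matrices and `0 ≤ β_i ≤ β`. With
`R = (I − β_h M_h)⋯(I − β_1 M_1) − I + ∑_i β_i M_i`, one has
`(1 + K‖R‖)^{2p} ≤ exp(2^{h+1} p (Kβ)^{1+ε} (1+ε)⁻¹ ∑_i ‖M_i‖^{1+ε})`. -/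
theorem remainder_product_bound {d : ℕ} (K p ε β : ℝ) (h : ℕ)
    (hK : 1 ≤ K) (hp : 1 ≤ p) (hε0 : 0 < ε) (hε1 : ε < 1) (hh : 1 ≤ h) (hβ : 0 < β)
    (M : Fin h → Matrix (Fin d) (Fin d) ℝ) (βs : Fin h → ℝ)
    (hβs : ∀ i, 0 ≤ βs i ∧ βs i ≤ β)
    (R : Matrix (Fin d) (Fin d) ℝ)
    (hR : R = (List.ofFn (fun i : Fin h =>
          (1 : Matrix (Fin d) (Fin d) ℝ) - βs i • M i)).reverse.prod
        - 1 + ∑ i, βs i • M i) :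
    (1 + K * specNorm R) ^ (2 * p) ≤
      Real.exp (2 ^ (h + 1) * p * (K * β) ^ (1 + ε) * (1 + ε)⁻¹ *
        ∑ i, specNorm (M i) ^ (1 + ε)) :=
  remainder_product_bound_general K p ε β h hK hp hε0 hε1 M βs hβs R hR
end

section
/- Let Q be a Markov kernel on a measurable space X satisfying the super-Lyapunov drift condition: there are constants c > 0, b ≥ 1, δ ∈ (1/2, 1], R₀ ≥ 0 and a measurable function Ṽ : X → [e, ∞) such that, setting W̃ = log Ṽ, for every x ∈ X one has QṼ(x) ≤ exp(−c W̃(x)^δ) Ṽ(x) if W̃(x) > R₀, and QṼ(x) ≤ b if W̃(x) ≤ R₀. Fix τ ∈ ℕ, τ ≥ 1, and define the Markov kernel P on X^{τ+1} by P((x_0,…,x_τ), B) = ∫_X 1_B(x_1,…,x_τ, y) Q(x_τ, dy). Then there exist constants c₀ > 0, c_P > 0, b_P > 0 and R_P ≥ 0 such that, setting V(x_0,…,x_τ) = exp( c₀ Σ_{i=0}^{τ−1} (i+1) W̃(x_i)^δ + W̃(x_τ) ) and W = log V, for every (x_0,…,x_τ) ∈ X^{τ+1}: PV(x_0,…,x_τ)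 ≤ exp( −c_P W(x_0,…,x_τ)^δ ) V(x_0,…,x_τ) · 1{W(x_0,…,x_τ) ≥ R_P} + b_P · 1{W(x_0,…,x_τ) < R_P}. -/
/-!
Shifting the path lowers each weight `i + 1` of the head by one and gives the last coordinate the
weight `τ`, so `W(x₁,…,x_τ,y) = W(x) - W̃(x_τ) - c₀ T + c₀ τ W̃(x_τ)^δ + W̃(y)` with
`T = ∑_{i<τ} W̃(x_i)^δ`, and integrating in `y` against `Q(x_τ, ·)` brings in the drift of `Q`.
With `c₀ τ = c / 2`, off the small set of `Ṽ` the exponent loses `c₀ T + (c/2) W̃(x_τ)^δ`, which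
dominates a multiple of `W^δ` because `t ↦ t^δ` is subadditive. On the small set the loss is
`W̃(x_τ) + c₀ T - (c/2) W̃(x_τ)^δ - log b`; as `τ (W̃(x_τ) + c₀ T) ≥ W` and `W̃(x_τ) ≤ R₀` there,
the loss beats `W / (2τ) ≥ c_P W^δ` as soon as `W ≥ R_P = τ (c R₀ + 2 log b)`. Below `R_P` the
exponent is bounded by a constant.
-/

open MeasureTheory ProbabilityTheory

/-- The left-shift on paths in `X^{τ+1}`: drop the first coordinate and append `y`. -/
def shiftPath {X : Type*} (τ : ℕ) (x : Fin (τ + 1) → X) (y : X) : Fin (τ + 1) → X :=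
  fun i => if h : (i : ℕ) < τ then x ⟨(i : ℕ) + 1, by omega⟩ else y

/-- The log-Lyapunov function `W(x_0,…,x_τ) = c₀ ∑_{i=0}^{τ−1} (i+1) W̃(x_i)^δ + W̃(x_τ)`
on `X^{τ+1}`. -/
noncomputable def tdW {X : Type*} (τ : ℕ) (Wt : X → ℝ) (δ c₀ : ℝ)
    (x : Fin (τ + 1) → X) : ℝ :=
  c₀ * ∑ i : Fin τ, (((i : ℕ) : ℝ) + 1) * Wt (x i.castSucc) ^ δ + Wt (x (Fin.last τ))

open Real

theorem Fin.sum_natCast_add_one_mul_succ (τ : ℕ) (f : Fin (τ + 1) → ℝ) :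
    ∑ i : Fin τ, ((i : ℝ) + 1) * f i.succ =
      ∑ i : Fin τ, ((i : ℝ) + 1) * f i.castSucc - ∑ i : Fin τ, f i.castSucc +
        τ * f (Fin.last τ) := by
  have h₁ := Fin.sum_univ_castSucc fun j : Fin (τ + 1) => (j : ℝ) * f j
  have h₂ := Fin.sum_univ_succ fun j : Fin (τ + 1) => (j : ℝ) * f j
  simp only [Fin.val_castSucc, Fin.val_succ, Fin.val_last, Fin.val_zero, Nat.cast_zero,
    zero_mul, zero_add, Nat.cast_add, Nat.cast_one] at h₁ h₂
  rw [← h₂, h₁]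
  simp only [add_mul, one_mul, Finset.sum_add_distrib]
  ring

section
variable {X : Type*} {τ : ℕ} (Wt : X → ℝ) (δ c₀ : ℝ) (x : Fin (τ + 1) → X)

theorem tdW_shiftPath (y : X) :
    tdW τ Wt δ c₀ (shiftPath τ x y) =
      tdW τ Wt δ c₀ x - Wt (x (Fin.last τ)) - c₀ * ∑ i : Fin τ, Wt (x i.castSucc) ^ δ +
        c₀ * τ * Wt (x (Fin.last τ)) ^ δ + Wt y := by
  have h_head (i : Fin τ) : shiftPath τ x y i.castSucc = x i.succ := by
    simp [shiftPath, Fin.succ]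
  have h_last : shiftPath τ x y (Fin.last τ) = y := by simp [shiftPath]
  simp only [tdW, h_head, h_last, Fin.sum_natCast_add_one_mul_succ τ fun j => Wt (x j) ^ δ]
  ring

theorem lintegral_exp_tdW_shiftPath_le [MeasurableSpace X] {μ : Measure X} {g : ℝ}
    (hμ : ∫⁻ y, ENNReal.ofReal (exp (Wt y)) ∂μ ≤ ENNReal.ofReal (exp g)) :
    ∫⁻ y, ENNReal.ofReal (exp (tdW τ Wt δ c₀ (shiftPath τ x y))) ∂μ ≤
      ENNReal.ofReal (exp (tdW τ Wt δ c₀ x - Wt (x (Fin.last τ)) -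
        c₀ * ∑ i : Fin τ, Wt (x i.castSucc) ^ δ + c₀ * τ * Wt (x (Fin.last τ)) ^ δ + g)) := by
  set a := tdW τ Wt δ c₀ x - Wt (x (Fin.last τ)) - c₀ * ∑ i : Fin τ, Wt (x i.castSucc) ^ δ +
    c₀ * τ * Wt (x (Fin.last τ)) ^ δ
  have h_shift (y : X) : tdW τ Wt δ c₀ (shiftPath τ x y) = a + Wt y := tdW_shiftPath Wt δ c₀ x y
  simp_rw [h_shift, exp_add a, ENNReal.ofReal_mul (exp_pos _).le]
  rw [lintegral_const_mul' _ _ ENNReal.ofReal_ne_top]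
  gcongr

variable {Wt δ} (hW : ∀ u, 1 ≤ Wt u) {c₀} (hc₀ : 0 ≤ c₀)
include hW hc₀

theorem le_tdW : Wt (x (Fin.last τ)) ≤ tdW τ Wt δ c₀ x := by
  have : 0 ≤ ∑ i : Fin τ, ((i : ℝ) + 1) * Wt (x i.castSucc) ^ δ :=
    Finset.sum_nonneg fun i _ =>
      mul_nonneg (by positivity) (rpow_nonneg (zero_le_one.trans (hW _)) δ)
  exact le_add_of_nonneg_left (mul_nonneg hc₀ this)

theorem tdW_le :
    tdW τ Wt δ c₀ x ≤ c₀ * τ * ∑ i : Fin τ, Wt (x i.castSucc) ^ δ + Wt (x (Fin.last τ)) := by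
  have : ∑ i : Fin τ, ((i : ℝ) + 1) * Wt (x i.castSucc) ^ δ ≤
      τ * ∑ i : Fin τ, Wt (x i.castSucc) ^ δ := by
    rw [Finset.mul_sum]
    gcongr with i
    · exact rpow_nonneg (zero_le_one.trans (hW _)) δ
    · exact_mod_cast i.isLt
  unfold tdW
  rw [mul_assoc]
  gcongr

theorem tdW_rpow_le (hδ₀ : 0 ≤ δ) (hδ₁ : δ ≤ 1) (hτ : 1 ≤ τ) :
    tdW τ Wt δ c₀ x ^ δ ≤
      (c₀ * τ) ^ δ * ∑ i : Fin τ, Wt (x i.castSucc) ^ δ + Wt (x (Fin.last τ)) ^ δ := by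
  set T := ∑ i : Fin τ, Wt (x i.castSucc) ^ δ
  have hT : 1 ≤ T := calc
    (1 : ℝ) ≤ τ := by exact_mod_cast hτ
    _ = ∑ _i : Fin τ, (1 : ℝ) := by simp
    _ ≤ T := Finset.sum_le_sum fun i _ => one_le_rpow (hW _) hδ₀
  have hw := hW (x (Fin.last τ))
  calc tdW τ Wt δ c₀ x ^ δ ≤ (c₀ * τ * T + Wt (x (Fin.last τ))) ^ δ :=
        rpow_le_rpow (by linarith [le_tdW x hW hc₀ (δ := δ)]) (tdW_le x hW hc₀) hδ₀
    _ ≤ (c₀ * τ * T) ^ δ + Wt (x (Fin.last τ)) ^ δ :=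
        rpow_add_le_add_rpow (by positivity) (by linarith) hδ₀ hδ₁
    _ = (c₀ * τ) ^ δ * T ^ δ + Wt (x (Fin.last τ)) ^ δ := by
        rw [mul_rpow (by positivity) (by linarith)]
    _ ≤ (c₀ * τ) ^ δ * T + Wt (x (Fin.last τ)) ^ δ := by
        gcongr
        exact rpow_le_self_of_one_le hT hδ₁

theorem mul_tdW_rpow_le (hδ₀ : 0 ≤ δ) (hδ₁ : δ ≤ 1) (hτ : 1 ≤ τ) {κ c : ℝ} (hκ : 0 ≤ κ)
    (hκc₀ : κ * (c₀ * τ) ^ δ ≤ c₀) (hκc : κ ≤ c) :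
    κ * tdW τ Wt δ c₀ x ^ δ ≤
      c₀ * ∑ i : Fin τ, Wt (x i.castSucc) ^ δ + c * Wt (x (Fin.last τ)) ^ δ := by
  have hT : 0 ≤ ∑ i : Fin τ, Wt (x i.castSucc) ^ δ :=
    Finset.sum_nonneg fun i _ => rpow_nonneg (zero_le_one.trans (hW _)) δ
  have hw : 0 ≤ Wt (x (Fin.last τ)) ^ δ := rpow_nonneg (zero_le_one.trans (hW _)) δ
  calc κ * tdW τ Wt δ c₀ x ^ δ ≤
        κ * ((c₀ * τ) ^ δ * ∑ i : Fin τ, Wt (x i.castSucc) ^ δ + Wt (x (Fin.last τ)) ^ δ) :=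
        mul_le_mul_of_nonneg_left (tdW_rpow_le x hW hc₀ hδ₀ hδ₁ hτ) hκ
    _ = κ * (c₀ * τ) ^ δ * ∑ i : Fin τ, Wt (x i.castSucc) ^ δ + κ * Wt (x (Fin.last τ)) ^ δ := by
        ring
    _ ≤ _ := by gcongr

theorem mul_tdW_rpow_add_le_of_last_le (hδ₁ : δ ≤ 1) (hτ : 1 ≤ τ) {κ a R : ℝ} (hκ : 0 ≤ κ)
    (hκτ : 2 * τ * κ ≤ 1) (hwR : Wt (x (Fin.last τ)) ≤ R)
    (hRW : 2 * τ * (c₀ * τ * R + a) ≤ tdW τ Wt δ c₀ x) :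
    κ * tdW τ Wt δ c₀ x ^ δ + c₀ * τ * Wt (x (Fin.last τ)) ^ δ + a ≤
      Wt (x (Fin.last τ)) + c₀ * ∑ i : Fin τ, Wt (x i.castSucc) ^ δ := by
  set W := tdW τ Wt δ c₀ x
  set w := Wt (x (Fin.last τ))
  have hw : 1 ≤ w := hW _
  have hτ' : (1 : ℝ) ≤ τ := by exact_mod_cast hτ
  have hW1 : 1 ≤ W := hw.trans (le_tdW x hW hc₀)
  have h_head : τ * (κ * W ^ δ) ≤ W / 2 := calc
    τ * (κ * W ^ δ) ≤ τ * (κ * W) := by gcongr; exact rpow_le_self_of_one_le hW1 hδ₁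
    _ ≤ W / 2 := by nlinarith
  have h_last : c₀ * τ * τ * w ^ δ ≤ c₀ * τ * τ * R :=
    mul_le_mul_of_nonneg_left ((rpow_le_self_of_one_le hw hδ₁).trans hwR) (by positivity)
  refine le_of_mul_le_mul_left ?_ (by linarith : (0 : ℝ) < τ)
  nlinarith [tdW_le x hW hc₀ (δ := δ)]

end

theorem ofReal_exp_le_drift_bound {v W δ cP RP K : ℝ} (h_large : RP ≤ W → v ≤ W - cP * W ^ δ)
    (h_small : W < RP → v ≤ K) :
    ENNReal.ofReal (exp v) ≤
      ENNReal.ofReal (exp (-cP * W ^ δ) * exp W * (if RP ≤ W then 1 else 0) +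
        exp K * (if W < RP then 1 else 0)) := by
  apply ENNReal.ofReal_le_ofReal
  by_cases h : RP ≤ W
  · simpa [h, not_lt.2 h, ← exp_add, neg_mul, neg_add_eq_sub] using h_large h
  · simpa [h, lt_of_not_ge h] using h_small (lt_of_not_ge h)

theorem lintegral_exp_tdW_shiftPath_le_drift_bound {X : Type*} [MeasurableSpace X]
    (Q : Kernel X X) {Vt Wt : X → ℝ} {c b δ R₀ c₀ κ : ℝ} {τ : ℕ}
    (hV : ∀ u, exp (Wt u) = Vt u) (hW : ∀ u, 1 ≤ Wt u)
    (hdrift₁ : ∀ u, R₀ < Wt u →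
      ∫⁻ y, ENNReal.ofReal (Vt y) ∂(Q u) ≤ ENNReal.ofReal (exp (-c * Wt u ^ δ) * Vt u))
    (hdrift₂ : ∀ u, Wt u ≤ R₀ → ∫⁻ y, ENNReal.ofReal (Vt y) ∂(Q u) ≤ ENNReal.ofReal b)
    (hc : 0 ≤ c) (hb : 1 ≤ b) (hR₀ : 0 ≤ R₀) (hδ₀ : 0 ≤ δ) (hδ₁ : δ ≤ 1) (hτ : 1 ≤ τ)
    (hc₀ : 0 ≤ c₀) (hc₀τ : c₀ * τ = c / 2) (hκ : 0 ≤ κ) (hκc₀ : κ * (c₀ * τ) ^ δ ≤ c₀)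
    (hκc : κ ≤ c / 2) (hκτ : 2 * τ * κ ≤ 1) (x : Fin (τ + 1) → X) :
    ∫⁻ y, ENNReal.ofReal (exp (tdW τ Wt δ c₀ (shiftPath τ x y))) ∂(Q (x (Fin.last τ))) ≤
      ENNReal.ofReal (exp (-κ * tdW τ Wt δ c₀ x ^ δ) * exp (tdW τ Wt δ c₀ x) *
          (if 2 * τ * (c₀ * τ * R₀ + log b) ≤ tdW τ Wt δ c₀ x then 1 else 0) +
        exp (2 * τ * (c₀ * τ * R₀ + log b) + c₀ * τ * R₀ + log b) *
          (if tdW τ Wt δ c₀ x < 2 * τ * (c₀ * τ * R₀ + log b) then 1 else 0)) := by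
  set w := Wt (x (Fin.last τ))
  have hwδ : w ^ δ ≤ w := rpow_le_self_of_one_le (hW _) hδ₁
  have hwδ₀ : 0 ≤ w ^ δ := rpow_nonneg (zero_le_one.trans (hW _)) δ
  have hT : 0 ≤ c₀ * ∑ i : Fin τ, Wt (x i.castSucc) ^ δ :=
    mul_nonneg hc₀ (Finset.sum_nonneg fun i _ => rpow_nonneg (zero_le_one.trans (hW _)) δ)
  have hlogb : 0 ≤ log b := log_nonneg hb
  rcases lt_or_ge R₀ w with hw | hw
  · refine (lintegral_exp_tdW_shiftPath_le Wt δ c₀ x (g := -c * w ^ δ + w) ?_).trans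
      (ofReal_exp_le_drift_bound (fun _ => ?_) fun h => ?_)
    · rw [exp_add, hV (x (Fin.last τ))]
      simpa only [hV] using hdrift₁ _ hw
    · rw [hc₀τ]
      linarith [mul_tdW_rpow_le x hW hc₀ hδ₀ hδ₁ hτ hκ hκc₀ hκc]
    · rw [hc₀τ] at h ⊢
      linarith [mul_nonneg hc hwδ₀, mul_nonneg hc hR₀]
  · refine (lintegral_exp_tdW_shiftPath_le Wt δ c₀ x (g := log b) ?_).trans
      (ofReal_exp_le_drift_bound (fun h => ?_) fun h => ?_)
    · simpa only [hV, exp_log (by linarith : 0 < b)] using hdrift₂ _ hw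
    · linarith [mul_tdW_rpow_add_le_of_last_le x hW hc₀ hδ₁ hτ hκ hκτ hw h]
    · have : c₀ * τ * w ^ δ ≤ c₀ * τ * R₀ :=
        mul_le_mul_of_nonneg_left (hwδ.trans hw) (by positivity)
      linarith [hW (x (Fin.last τ))]

theorem td_lambda_shifted_kernel_drift_general {X : Type*} [MeasurableSpace X]
    (Q : Kernel X X)
    (Vt : X → ℝ) (hVe : ∀ x, Real.exp 1 ≤ Vt x)
    (c b δ R₀ : ℝ) (hc : 0 < c) (hb : 1 ≤ b)
    (hδ1 : 1 / 2 < δ) (hδ2 : δ ≤ 1) (hR₀ : 0 ≤ R₀)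
    (Wt : X → ℝ) (hWt : Wt = fun x => Real.log (Vt x))
    (hdrift₁ : ∀ x, R₀ < Wt x →
      ∫⁻ y, ENNReal.ofReal (Vt y) ∂(Q x) ≤
        ENNReal.ofReal (Real.exp (-c * Wt x ^ δ) * Vt x))
    (hdrift₂ : ∀ x, Wt x ≤ R₀ → ∫⁻ y, ENNReal.ofReal (Vt y) ∂(Q x) ≤ ENNReal.ofReal b)
    (τ : ℕ) (hτ : 1 ≤ τ) :
    ∃ c₀ cP bP RP : ℝ, 0 < c₀ ∧ 0 < cP ∧ 0 < bP ∧ 0 ≤ RP ∧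
      ∀ x : Fin (τ + 1) → X,
        ∫⁻ y, ENNReal.ofReal (Real.exp (tdW τ Wt δ c₀ (shiftPath τ x y)))
            ∂(Q (x (Fin.last τ))) ≤
          ENNReal.ofReal
            (Real.exp (-cP * tdW τ Wt δ c₀ x ^ δ) * Real.exp (tdW τ Wt δ c₀ x) *
                (if RP ≤ tdW τ Wt δ c₀ x then 1 else 0) +
              bP * (if tdW τ Wt δ c₀ x < RP then 1 else 0)) := by
  have hτ' : (0 : ℝ) < τ := by exact_mod_cast hτ
  have hV (u : X) : exp (Wt u) = Vt u := by rw [hWt, exp_log ((exp_pos 1).trans_le (hVe u))]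
  have hW (u : X) : 1 ≤ Wt u := exp_le_exp.1 ((hVe u).trans_eq (hV u).symm)
  set c₀ := c / (2 * τ)
  have hc₀τ : c₀ * τ = c / 2 := by simp only [c₀]; field_simp
  set cP := min (c₀ / (c₀ * τ) ^ δ) (min (c / 2) (1 / (2 * τ)))
  have hcP₁ : cP * (c₀ * τ) ^ δ ≤ c₀ := (le_div_iff₀ (by positivity)).1 (min_le_left _ _)
  have hcP₂ : cP ≤ c / 2 := min_le_of_right_le (min_le_left _ _)
  have hcP₃ : 2 * τ * cP ≤ 1 := by
    rw [mul_comm]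
    exact (le_div_iff₀ (by positivity)).1 (min_le_of_right_le (min_le_right _ _))
  have hlogb : 0 ≤ log b := log_nonneg hb
  exact ⟨c₀, cP, _, _, by positivity, by positivity, exp_pos _, by positivity,
    lintegral_exp_tdW_shiftPath_le_drift_bound Q hV hW hdrift₁ hdrift₂ hc.le hb hR₀
      (by linarith) hδ2 hτ (by positivity) hc₀τ (by positivity) hcP₁ hcP₂ hcP₃⟩

/-- If `Q` satisfies the super-Lyapunov drift condition with function
`Ṽ`, then the shifted kernel `P` on `X^{τ+1}` (shift left, draw the new last coordinate
from `Q`) satisfies a super-Lyapunov drift condition for the Lyapunov function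
`V(x_0,…,x_τ) = exp(c₀ ∑_{i<τ} (i+1) W̃(x_i)^δ + W̃(x_τ))`, for suitable constants
`c₀, c_P, b_P > 0` and `R_P ≥ 0`. -/
theorem td_lambda_shifted_kernel_drift {X : Type*} [MeasurableSpace X]
    (Q : Kernel X X) [IsMarkovKernel Q]
    (Vt : X → ℝ) (hVmeas : Measurable Vt) (hVe : ∀ x, Real.exp 1 ≤ Vt x)
    (c b δ R₀ : ℝ) (hc : 0 < c) (hb : 1 ≤ b)
    (hδ1 : 1 / 2 < δ) (hδ2 : δ ≤ 1) (hR₀ : 0 ≤ R₀)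
    (Wt : X → ℝ) (hWt : Wt = fun x => Real.log (Vt x))
    (hdrift₁ : ∀ x, R₀ < Wt x →
      ∫⁻ y, ENNReal.ofReal (Vt y) ∂(Q x) ≤
        ENNReal.ofReal (Real.exp (-c * Wt x ^ δ) * Vt x))
    (hdrift₂ : ∀ x, Wt x ≤ R₀ → ∫⁻ y, ENNReal.ofReal (Vt y) ∂(Q x) ≤ ENNReal.ofReal b)
    (τ : ℕ) (hτ : 1 ≤ τ) :
    ∃ c₀ cP bP RP : ℝ, 0 < c₀ ∧ 0 < cP ∧ 0 < bP ∧ 0 ≤ RP ∧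
      ∀ x : Fin (τ + 1) → X,
        ∫⁻ y, ENNReal.ofReal (Real.exp (tdW τ Wt δ c₀ (shiftPath τ x y)))
            ∂(Q (x (Fin.last τ))) ≤
          ENNReal.ofReal
            (Real.exp (-cP * tdW τ Wt δ c₀ x ^ δ) * Real.exp (tdW τ Wt δ c₀ x) *
                (if RP ≤ tdW τ Wt δ c₀ x then 1 else 0) +
              bP * (if tdW τ Wt δ c₀ x < RP then 1 else 0)) :=
  td_lambda_shifted_kernel_drift_general Q Vt hVe c b δ R₀ hc hb hδ1 hδ2 hR₀ Wt hWt hdrift₁ hdrift₂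
    τ hτ
end
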